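/- arXiv:1510.02187 — 6 statements merged into one kernel-verified Lean document; each statement's English description precedes it below -/
import Mathlib

section
/- For every β ∈ (0, 1/2) and every x ≥ 0 with |x−1| ≥ β one has |x−1| ≤ (4/β)·ℓ(x). -/
/-!
For `x ≤ 1` write `x = s²`: `log s ≥ 1 - 1/s` gives `ℓ(s²) ≥ (1 - s)² ≥ (1 - s²)² / 4`, and
`β (1 - x) ≤ (1 - x)²`. For `x ≥ 1`, `log x ≥ 2 (x - 1) / (x + 1)` gives
`(x + 1) ℓ(x) ≥ (x - 1)²`, and `β (x + 1) ≤ 4 (x - 1)` once `β ≤ x - 1` and `β ≤ 2`.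
-/

/-- `ℓ(r) = r log r - r + 1` (with `ℓ(0) = 1`, which holds since `Real.log 0 = 0`). -/
noncomputable def ell (r : ℝ) : ℝ := r * Real.log r - r + 1

open Real

lemma sq_sqrt_sub_one_le_ell {x : ℝ} (hx : 0 ≤ x) : (√x - 1) ^ 2 ≤ ell x := by
  obtain ⟨s, hs, rfl⟩ : ∃ s, 0 ≤ s ∧ s ^ 2 = x := ⟨√x, sqrt_nonneg x, sq_sqrt hx⟩
  rw [sqrt_sq hs, ell, log_pow]
  rcases hs.eq_or_lt with rfl | hs
  · norm_num
  have hlog : s - 1 ≤ s * log s := by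
    have := one_sub_inv_le_log_of_pos hs
    rwa [← mul_le_mul_iff_of_pos_left hs, mul_sub, mul_one, mul_inv_cancel₀ hs.ne'] at this
  push_cast
  nlinarith

lemma sq_sub_one_le_four_mul_ell {x : ℝ} (hx0 : 0 ≤ x) (hx1 : x ≤ 1) :
    (x - 1) ^ 2 ≤ 4 * ell x := by
  have hs : √x ≤ 1 := sqrt_le_one.mpr hx1
  calc (x - 1) ^ 2 = (√x - 1) ^ 2 * (√x + 1) ^ 2 := by
        rw [← mul_pow, mul_comm, ← sq_sub_sq, sq_sqrt hx0, one_pow]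
    _ ≤ (√x - 1) ^ 2 * 4 := by gcongr; nlinarith [sqrt_nonneg x]
    _ ≤ 4 * ell x := by linarith [sq_sqrt_sub_one_le_ell hx0]

lemma sq_sub_one_le_add_one_mul_ell {x : ℝ} (hx : 1 ≤ x) :
    (x - 1) ^ 2 ≤ (x + 1) * ell x := by
  have hlog : 2 * (x - 1) ≤ (x + 1) * log x := by
    have := le_log_one_add_of_nonneg (sub_nonneg.mpr hx)
    rw [add_sub_cancel, div_le_iff₀ (by linarith)] at this
    linarith [show log x * (x - 1 + 2) = (x + 1) * log x by ring]
  rw [ell]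
  nlinarith

lemma mul_abs_sub_one_le_four_mul_ell {β x : ℝ} (hβ : β ≤ 2) (hx : 0 ≤ x)
    (hβx : β ≤ |x - 1|) : β * |x - 1| ≤ 4 * ell x := by
  rcases le_total x 1 with hx1 | hx1
  · rw [abs_of_nonpos (by linarith)] at hβx ⊢
    nlinarith [sq_sub_one_le_four_mul_ell hx hx1]
  · rw [abs_of_nonneg (by linarith)] at hβx ⊢
    have hell : 0 ≤ ell x := sq_nonneg _ |>.trans (sq_sqrt_sub_one_le_ell hx)
    have hβ_add : β * (x + 1) ≤ 4 * (x - 1) := by nlinarith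
    nlinarith [sq_sub_one_le_add_one_mul_ell hx1]

/-- For every `β ∈ (0,1/2)` and every `x ≥ 0` with `|x−1| ≥ β` one has
`|x−1| ≤ (4/β)·ℓ(x)`. -/
theorem stmt2 :
    ∀ β : ℝ, 0 < β → β < 1/2 →
      ∀ x : ℝ, 0 ≤ x → β ≤ |x - 1| → |x - 1| ≤ (4 / β) * ell x := by
  intro β hβ0 hβ x hx hβx
  rw [div_mul_eq_mul_div, le_div_iff₀ hβ0, mul_comm]
  exact mul_abs_sub_one_le_four_mul_ell (by linarith) hx hβx
end

section
/- Let q ∈ Ŝ and suppose ‖Γ‖_∞ < ∞. Then for every i ∈ ℕ the series ∑_j q_j Γ_ji(q) converges absolutely with |∑_j q_j Γ_ji(q)| ≤ ‖Γ‖_∞, and moreover ∑_i (∑_j q_j Γ_ji(q))² ≤ 2‖Γ‖_∞²; in particular b(q) := ∑_i (∑_j q_j Γ_ji(q)) e_i is a well-defined element of ℓ²(ℕ) with ‖b(q)‖² ≤ 2‖Γ‖_∞². -/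
noncomputable section
open MeasureTheory

/-- The Hilbert space `ℓ²(ℕ)` of square-summable real sequences. -/
abbrev H2 : Type := lp (fun _ : ℕ => ℝ) 2

/-- The simplex `Ŝ` of probability vectors in `ℓ²(ℕ)`. -/
def simplexS : Set H2 := {q | (∀ i, 0 ≤ q i) ∧ HasSum (fun i => q i) 1}

/-- The set `A_ij(q) ⊆ X = [0,∞)²` (here `K` plays the role of `‖Γ‖_∞`). -/
def Aset (K : ℝ) (Γ : H2 → ℕ → ℕ → ℝ) (q : H2) (i j : ℕ) : Set (ℝ × ℝ) :=
  Set.Ioc (i : ℝ) (i + 1) ×ˢ Set.Ioc ((j : ℝ) * K) ((j : ℝ) * K + q i * Γ q i j)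

/-- The map `G : Ŝ × X → ℓ²(ℕ)`, `G(q,y) = ∑_{i ≠ j} (e_j − e_i) 1_{A_ij(q)}(y)`:
since the `A_ij(q)` are pairwise disjoint, `G(q,y) = e_j − e_i` for the (unique)
pair `(i,j)`, `i ≠ j`, with `y ∈ A_ij(q)`, and `G(q,y) = 0` otherwise. -/
def Gmap (K : ℝ) (Γ : H2 → ℕ → ℕ → ℝ) (q : H2) (y : ℝ × ℝ) : H2 :=
  @dite _ (∃ p : ℕ × ℕ, p.1 ≠ p.2 ∧ y ∈ Aset K Γ q p.1 p.2) (Classical.dec _)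
    (fun h => lp.single 2 h.choose.2 1 - lp.single 2 h.choose.1 1) (fun _ => 0)

/-- The rate matrix hypotheses: `Γ_ij(q) ≥ 0` for `i ≠ j`,
`Γ_ii(q) = −∑_{j≠i} Γ_ij(q)` (a convergent sum), and `K` is an upper bound for
`sup_{q∈Ŝ} sup_i |Γ_ii(q)|` (i.e. `‖Γ‖_∞ ≤ K < ∞`). -/
structure RateMatrix (K : ℝ) (Γ : H2 → ℕ → ℕ → ℝ) : Prop where
  nonneg : ∀ q ∈ simplexS, ∀ i j, i ≠ j → 0 ≤ Γ q i j
  diag : ∀ q ∈ simplexS, ∀ i,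
    HasSum (fun j => if j = i then 0 else Γ q i j) (-(Γ q i i))
  bound : ∀ q ∈ simplexS, ∀ i, |Γ q i i| ≤ K


/-- For `q ∈ Ŝ` and `‖Γ‖_∞ ≤ K < ∞`: each series `∑_j q_j Γ_ji(q)` converges
absolutely with `|∑_j q_j Γ_ji(q)| ≤ K`, `∑_i (∑_j q_j Γ_ji(q))² ≤ 2K²`, and
`b(q) := ∑_i (∑_j q_j Γ_ji(q)) e_i` is a well-defined element of `ℓ²(ℕ)` with
`‖b(q)‖² ≤ 2K²`. -/
theorem stmt6 (K : ℝ) (hK0 : 0 ≤ K) (Γ : H2 → ℕ → ℕ → ℝ) (hΓ : RateMatrix K Γ)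
    (q : H2) (hq : q ∈ simplexS) :
    (∀ i, Summable (fun j => |q j * Γ q j i|) ∧ |∑' j, q j * Γ q j i| ≤ K) ∧
    Summable (fun i => (∑' j, q j * Γ q j i) ^ 2) ∧
    (∑' i, (∑' j, q j * Γ q j i) ^ 2) ≤ 2 * K ^ 2 ∧
    ∃ bq : H2, (∀ i, bq i = ∑' j, q j * Γ q j i) ∧ ‖bq‖ ^ 2 ≤ 2 * K ^ 2 := by
  obtain ⟨hq0, hq1⟩ := hq
  have hqS : q ∈ simplexS := ⟨hq0, hq1⟩
  -- the diagonal is nonpositive and the whole row is bounded by K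
  have hdiag0 : ∀ j, 0 ≤ -(Γ q j j) := by
    intro j
    refine hasSum_le (f := fun _ => (0 : ℝ)) ?_ hasSum_zero (hΓ.diag q hqS j)
    intro k
    by_cases h : k = j
    · simp [h]
    · simpa [h] using hΓ.nonneg q hqS j k (Ne.symm h)
  have hΓle : ∀ j i, j ≠ i → Γ q j i ≤ K := by
    intro j i hij
    calc Γ q j i = (if i = j then 0 else Γ q j i) := by simp [hij.symm]
      _ ≤ -(Γ q j j) := by
          refine le_hasSum (hΓ.diag q hqS j) i ?_
          intro k hk
          by_cases h : k = j
          · simp [h]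
          · simpa [h] using hΓ.nonneg q hqS j k (Ne.symm h)
      _ ≤ |Γ q j j| := neg_le_abs _
      _ ≤ K := hΓ.bound q hqS j
  -- pointwise bound for the absolute values
  have habs : ∀ i j, |q j * Γ q j i| ≤ q j * K := by
    intro i j
    by_cases h : j = i
    · subst h
      rw [abs_mul, abs_of_nonneg (hq0 j)]
      exact mul_le_mul_of_nonneg_left (hΓ.bound q hqS j) (hq0 j)
    · rw [abs_of_nonneg (mul_nonneg (hq0 j) (hΓ.nonneg q hqS j i h))]
      exact mul_le_mul_of_nonneg_left (hΓle j i h) (hq0 j)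
  have hqK : Summable fun j => q j * K := hq1.summable.mul_right K
  have hqKsum : ∑' j, q j * K = K := by
    rw [tsum_mul_right, hq1.tsum_eq, one_mul]
  have hS : ∀ i, Summable fun j => |q j * Γ q j i| := fun i =>
    Summable.of_nonneg_of_le (fun j => abs_nonneg _) (habs i) hqK
  have hS' : ∀ i, Summable fun j => q j * Γ q j i := fun i => (hS i).of_abs
  have part1 : ∀ i, Summable (fun j => |q j * Γ q j i|) ∧ |∑' j, q j * Γ q j i| ≤ K := by
    intro i
    refine ⟨hS i, ?_⟩
    have h1 : ‖∑' j, q j * Γ q j i‖ ≤ ∑' j, ‖q j * Γ q j i‖ :=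
      norm_tsum_le_tsum_norm (by simpa only [Real.norm_eq_abs] using hS i)
    simp only [Real.norm_eq_abs] at h1
    calc |∑' j, q j * Γ q j i| ≤ ∑' j, |q j * Γ q j i| := h1
      _ ≤ ∑' j, q j * K := Summable.tsum_le_tsum (habs i) (hS i) hqK
      _ = K := hqKsum
  -- the off-diagonal double array
  set F : ℕ × ℕ → ℝ := fun p => if p.1 = p.2 then 0 else q p.1 * Γ q p.1 p.2 with hF
  have hF0 : (0 : ℕ × ℕ → ℝ) ≤ F := by
    intro p
    by_cases h : p.1 = p.2
    · simp [hF, h]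
    · simpa [hF, h] using mul_nonneg (hq0 p.1) (hΓ.nonneg q hqS p.1 p.2 h)
  have hFrow : ∀ j, HasSum (fun i => F (j, i)) (-(q j * Γ q j j)) := by
    intro j
    have h1 := (hΓ.diag q hqS j).mul_left (q j)
    have heq : (fun i => F (j, i)) = fun i => q j * (if i = j then 0 else Γ q j i) := by
      funext i
      by_cases h : i = j
      · simp [hF, h]
      · simp [hF, h, Ne.symm h]
    rw [heq]
    simpa [mul_neg] using h1
  have hFrowle : ∀ j, -(q j * Γ q j j) ≤ q j * K := by
    intro j
    rw [neg_mul_eq_mul_neg]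
    exact mul_le_mul_of_nonneg_left ((neg_le_abs _).trans (hΓ.bound q hqS j)) (hq0 j)
  have hFrow0 : ∀ j, 0 ≤ -(q j * Γ q j j) := fun j => by
    rw [neg_mul_eq_mul_neg]; exact mul_nonneg (hq0 j) (hdiag0 j)
  have hFsum : Summable F := by
    refine (summable_prod_of_nonneg hF0).2 ⟨fun j => (hFrow j).summable, ?_⟩
    have : (fun j => ∑' i, F (j, i)) = fun j => -(q j * Γ q j j) := by
      funext j; exact (hFrow j).tsum_eq
    rw [this]
    exact Summable.of_nonneg_of_le hFrow0 hFrowle hqK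
  -- the column sums c i
  set c : ℕ → ℝ := fun i => ∑' j, F (j, i) with hc
  have hFsw : Summable fun p : ℕ × ℕ => F p.swap := hFsum.prod_symm
  have hcsummable : Summable c := by
    have := ((summable_prod_of_nonneg (f := fun p : ℕ × ℕ => F p.swap)
      (fun p => hF0 p.swap)).1 hFsw).2
    simpa [Prod.swap] using this
  have hc0 : ∀ i, 0 ≤ c i := fun i => tsum_nonneg fun j => hF0 (j, i)
  have hcsum : ∑' i, c i ≤ K := by
    have hcomm : ∑' (i) (j), F (j, i) = ∑' (j) (i), F (j, i) :=
      Summable.tsum_comm (f := fun j i => F (j, i)) hFsum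
    calc ∑' i, c i = ∑' (j) (i), F (j, i) := hcomm
      _ = ∑' j, -(q j * Γ q j j) := by
          refine tsum_congr fun j => (hFrow j).tsum_eq
      _ ≤ ∑' j, q j * K := Summable.tsum_le_tsum hFrowle
          (Summable.of_nonneg_of_le hFrow0 hFrowle hqK) hqK
      _ = K := hqKsum
  -- splitting b i
  set b : ℕ → ℝ := fun i => ∑' j, q j * Γ q j i with hb
  have hsplit : ∀ i, b i = q i * Γ q i i + c i := by
    intro i
    have := Summable.tsum_eq_add_tsum_ite (hS' i) i
    simpa [hb, hc, hF] using this
  set a : ℕ → ℝ := fun i => q i * K + c i with ha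
  have hba : ∀ i, |b i| ≤ a i := by
    intro i
    rw [hsplit i]
    calc |q i * Γ q i i + c i| ≤ |q i * Γ q i i| + |c i| := abs_add_le _ _
      _ ≤ q i * K + c i := add_le_add (habs i i) (le_of_eq (abs_of_nonneg (hc0 i)))
  have hasummable : Summable a := hqK.add hcsummable
  have hasum : ∑' i, a i ≤ 2 * K := by
    rw [ha, Summable.tsum_add hqK hcsummable, hqKsum]
    linarith [hcsum]
  have ha0 : ∀ i, 0 ≤ a i := fun i => add_nonneg (mul_nonneg (hq0 i) hK0) (hc0 i)
  have hb2 : ∀ i, b i ^ 2 ≤ K * a i := by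
    intro i
    rw [sq, ← abs_mul_abs_self (b i)]
    exact mul_le_mul (part1 i).2 (hba i) (abs_nonneg _) hK0
  have hb2summable : Summable fun i => b i ^ 2 :=
    Summable.of_nonneg_of_le (fun i => sq_nonneg _) hb2 (hasummable.mul_left K)
  have hb2sum : ∑' i, b i ^ 2 ≤ 2 * K ^ 2 := by
    calc ∑' i, b i ^ 2 ≤ ∑' i, K * a i := Summable.tsum_le_tsum hb2 hb2summable (hasummable.mul_left K)
      _ = K * ∑' i, a i := tsum_mul_left
      _ ≤ K * (2 * K) := mul_le_mul_of_nonneg_left hasum hK0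
      _ = 2 * K ^ 2 := by ring
  refine ⟨part1, hb2summable, hb2sum, ?_⟩
  -- the ℓ² element
  have hnorm2 : ∀ i, ‖b i‖ ^ (2 : ENNReal).toReal = b i ^ 2 := by
    intro i
    rw [ENNReal.toReal_ofNat, show ((2:ℝ)) = ((2:ℕ):ℝ) by norm_num,
      Real.rpow_natCast, Real.norm_eq_abs, sq_abs]
  have hmem : Memℓp b 2 := by
    apply memℓp_gen
    have : (fun i => ‖b i‖ ^ (2 : ENNReal).toReal) = fun i => b i ^ 2 := funext hnorm2
    rw [this]
    exact hb2summable
  refine ⟨⟨b, hmem⟩, fun i => rfl, ?_⟩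
  have hp2 : (0 : ℝ) < (2 : ENNReal).toReal := by norm_num
  have := lp.norm_rpow_eq_tsum hp2 (⟨b, hmem⟩ : H2)
  have hcoe : ∀ i, ((⟨b, hmem⟩ : H2) : ∀ _ : ℕ, ℝ) i = b i := fun i => rfl
  calc ‖(⟨b, hmem⟩ : H2)‖ ^ 2 = ‖(⟨b, hmem⟩ : H2)‖ ^ (2 : ENNReal).toReal := by
        rw [ENNReal.toReal_ofNat, ← Real.rpow_natCast ‖(⟨b, hmem⟩ : H2)‖ 2]
        norm_num
    _ = ∑' i, ‖b i‖ ^ (2 : ENNReal).toReal := this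
    _ = ∑' i, b i ^ 2 := tsum_congr hnorm2
    _ ≤ 2 * K ^ 2 := hb2sum

end
end

section
/- Suppose ‖Γ‖_∞ < ∞. Then for every k ∈ ℕ, sup_{q ∈ Ŝ} ∫_X ‖G(q,y)‖^k λ_X(dy) ≤ 2^{k/2} ‖Γ‖_∞. -/
noncomputable section
open MeasureTheory

lemma norm_sub_single (i j : ℕ) (hij : i ≠ j) :
    ‖(lp.single 2 j (1:ℝ) - lp.single 2 i 1 : H2)‖ = Real.sqrt 2 := by
  set f : H2 := lp.single 2 j (1:ℝ) - lp.single 2 i 1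
  have hp : 0 < (2 : ENNReal).toReal := by norm_num
  have htsum : ∑' n, ‖f n‖ ^ (2 : ENNReal).toReal = 2 := by
    have hval : ∀ n, ‖f n‖ ^ (2 : ENNReal).toReal = if n = i ∨ n = j then 1 else 0 := by
      intro n
      have : f n = (lp.single 2 j (1:ℝ) : H2) n - (lp.single 2 i (1:ℝ) : H2) n := by
        simp [f]
      rw [this]
      by_cases h1 : n = i
      · subst h1
        rw [lp.single_apply_ne 2 j _ hij, lp.single_apply_self]
        simp
      · by_cases h2 : n = j
        · subst h2
          rw [lp.single_apply_self, lp.single_apply_ne 2 i _ h1]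
          simp
        · rw [lp.single_apply_ne 2 j _ h2, lp.single_apply_ne 2 i _ h1]
          simp [Real.zero_rpow hp.ne', h1, h2]
    rw [tsum_eq_sum (s := {i, j}) (by
      intro n hn
      simp only [Finset.mem_insert, Finset.mem_singleton, not_or] at hn
      rw [hval n, if_neg (by tauto)])]
    rw [Finset.sum_pair hij, hval i, hval j]
    norm_num
  have h2 : ‖f‖ ^ (2 : ℕ) = 2 := by
    have := lp.norm_rpow_eq_tsum hp f
    rw [htsum] at this
    rw [← Real.rpow_natCast ‖f‖ 2]
    simpa using this
  rw [← Real.sqrt_sq (norm_nonneg f), h2]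

/-- For every `k ∈ ℕ` (`k ≥ 1`), `sup_{q∈Ŝ} ∫_X ‖G(q,y)‖^k λ_X(dy) ≤ 2^{k/2} ‖Γ‖_∞`.
(The integral over `X = [0,∞)²` equals the integral over `ℝ²` since `G(q,·)`
vanishes off `X`.) -/
theorem stmt7 (K : ℝ) (hK0 : 0 ≤ K) (Γ : H2 → ℕ → ℕ → ℝ) (hΓ : RateMatrix K Γ)
    (k : ℕ) (hk : 1 ≤ k) (q : H2) (hq : q ∈ simplexS) :
    ∫⁻ y : ℝ × ℝ, ENNReal.ofReal (‖Gmap K Γ q y‖ ^ k)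
      ≤ ENNReal.ofReal ((2 : ℝ) ^ ((k : ℝ) / 2) * K) := by
  set S : Set (ℝ × ℝ) := ⋃ p : ℕ × ℕ, ⋃ _ : p.1 ≠ p.2, Aset K Γ q p.1 p.2 with hS
  have hSmeas : MeasurableSet S :=
    MeasurableSet.iUnion fun p => MeasurableSet.iUnion fun _ =>
      measurableSet_Ioc.prod measurableSet_Ioc
  -- pointwise bound
  have hpoint : ∀ y, ENNReal.ofReal (‖Gmap K Γ q y‖ ^ k)
      ≤ S.indicator (fun _ => ENNReal.ofReal (Real.sqrt 2 ^ k)) y := by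
    intro y
    by_cases hy : ∃ p : ℕ × ℕ, p.1 ≠ p.2 ∧ y ∈ Aset K Γ q p.1 p.2
    · have hyS : y ∈ S :=
        Set.mem_iUnion.2 ⟨hy.choose, Set.mem_iUnion.2 ⟨hy.choose_spec.1, hy.choose_spec.2⟩⟩
      rw [Set.indicator_of_mem hyS]
      have hG : Gmap K Γ q y = lp.single 2 hy.choose.2 1 - lp.single 2 hy.choose.1 1 := by
        unfold Gmap; rw [dif_pos hy]
      rw [hG, norm_sub_single _ _ hy.choose_spec.1]
    · have hG : Gmap K Γ q y = 0 := by unfold Gmap; rw [dif_neg hy]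
      rw [hG]
      simp [zero_pow (by omega : k ≠ 0)]
  -- volume bound
  have hvol : volume S ≤ ENNReal.ofReal K := by
    have hterm : ∀ p : ℕ × ℕ, volume (⋃ _ : p.1 ≠ p.2, Aset K Γ q p.1 p.2)
        ≤ ENNReal.ofReal (if p.2 = p.1 then 0 else q p.1 * Γ q p.1 p.2) := by
      intro p
      by_cases hp12 : p.1 = p.2
      · simp [hp12]
      · have hU : (⋃ _ : p.1 ≠ p.2, Aset K Γ q p.1 p.2) = Aset K Γ q p.1 p.2 := by
          simp [hp12]
        rw [hU, if_neg (fun h => hp12 h.symm)]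
        rw [Aset, MeasureTheory.Measure.volume_eq_prod, Measure.prod_prod, Real.volume_Ioc, Real.volume_Ioc]
        simp
    calc volume S ≤ ∑' p : ℕ × ℕ, volume (⋃ _ : p.1 ≠ p.2, Aset K Γ q p.1 p.2) :=
          measure_iUnion_le _
      _ ≤ ∑' p : ℕ × ℕ, ENNReal.ofReal (if p.2 = p.1 then 0 else q p.1 * Γ q p.1 p.2) :=
          ENNReal.tsum_le_tsum hterm
      _ = ∑' i, ∑' j, ENNReal.ofReal (if j = i then 0 else q i * Γ q i j) :=
          ENNReal.tsum_prod (f := fun i j => ENNReal.ofReal (if j = i then 0 else q i * Γ q i j))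
      _ ≤ ENNReal.ofReal K := by
          have hg0 : ∀ i j, 0 ≤ (if j = i then 0 else q i * Γ q i j) := by
            intro i j
            by_cases h : j = i
            · simp [h]
            · simp only [if_neg h]
              exact mul_nonneg (hq.1 i) (hΓ.nonneg q hq i j (Ne.symm h))
          have hsum_i : ∀ i, HasSum (fun j => if j = i then 0 else q i * Γ q i j)
              (q i * (-(Γ q i i))) := by
            intro i
            have := (hΓ.diag q hq i).mul_left (q i)
            simpa [mul_ite, mul_zero] using this
          have hinner : ∀ i, ∑' j, ENNReal.ofReal (if j = i then 0 else q i * Γ q i j)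
              = ENNReal.ofReal (q i * (-(Γ q i i))) := by
            intro i
            rw [← ENNReal.ofReal_tsum_of_nonneg (hg0 i) (hsum_i i).summable,
              (hsum_i i).tsum_eq]
          calc ∑' i, ∑' j, ENNReal.ofReal (if j = i then 0 else q i * Γ q i j)
              = ∑' i, ENNReal.ofReal (q i * (-(Γ q i i))) := by
                exact tsum_congr hinner
            _ ≤ ∑' i, ENNReal.ofReal (q i * K) := by
                refine ENNReal.tsum_le_tsum fun i => ENNReal.ofReal_le_ofReal ?_
                exact mul_le_mul_of_nonneg_left
                  (le_trans (neg_le_abs _) (hΓ.bound q hq i)) (hq.1 i)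
            _ = ENNReal.ofReal K := by
                rw [← ENNReal.ofReal_tsum_of_nonneg (fun i => mul_nonneg (hq.1 i) hK0)
                  (hq.2.summable.mul_right K), (hq.2.mul_right K).tsum_eq, one_mul]
  have hpow : Real.sqrt 2 ^ k = (2 : ℝ) ^ ((k : ℝ) / 2) := by
    rw [Real.sqrt_eq_rpow, ← Real.rpow_natCast ((2:ℝ) ^ ((1:ℝ)/2)) k,
      ← Real.rpow_mul (by norm_num : (0:ℝ) ≤ 2)]
    ring_nf
  calc ∫⁻ y : ℝ × ℝ, ENNReal.ofReal (‖Gmap K Γ q y‖ ^ k)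
      ≤ ∫⁻ y, S.indicator (fun _ => ENNReal.ofReal (Real.sqrt 2 ^ k)) y :=
        lintegral_mono hpoint
    _ = ENNReal.ofReal (Real.sqrt 2 ^ k) * volume S := lintegral_indicator_const hSmeas _
    _ ≤ ENNReal.ofReal (Real.sqrt 2 ^ k) * ENNReal.ofReal K := mul_le_mul_right hvol _
    _ = ENNReal.ofReal ((2 : ℝ) ^ ((k : ℝ) / 2) * K) := by
        rw [← ENNReal.ofReal_mul (by positivity), hpow]

end
end

section
/- Suppose ‖Γ‖_∞ < ∞ and let q ∈ Ŝ. Then for every i ∈ ℕ the function y ↦ G_i(q,y) is Lebesgue integrable on X and ∫_X G_i(q,y) λ_X(dy) = ∑_{j≠i} q_j Γ_ji(q) − q_i ∑_{j≠i} Γ_ij(q) = ∑_j q_j Γ_ji(q); consequently y ↦ G(q,y) is Bochner integrable with values in ℓ²(ℕ) and ∫_X G(q,y) λ_X(dy) = b(q), where b(q) := ∑_i (∑_j q_j Γ_ji(q)) e_i. -/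
noncomputable section
open MeasureTheory

/-!
The boxes `A_ij(q)` have area `q_i Γ_ij(q)`. They are pairwise disjoint: the bound
`q_i Γ_ij(q) ≤ ‖Γ‖_∞` keeps `A_ij(q)` inside the cell `(i, i+1] × (j‖Γ‖_∞, (j+1)‖Γ‖_∞]`, and
the diagonal boxes are empty because `Γ_ii(q) ≤ 0`. Their total area `∑_i q_i (-Γ_ii(q))` is
finite, and `G(q, ·)` is the constant `e_j − e_i` on `A_ij(q)` and `0` off their union. Hence
`G(q, ·)` is integrable with integral `∑_{i,j} q_i Γ_ij(q) (e_j − e_i)`, whose `i`-th coordinate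
is `∑_{j≠i} q_j Γ_ji(q) − q_i ∑_{j≠i} Γ_ij(q)`.
-/

open Set Function

section PiecewiseConstant

variable {ι α E : Type*} [Countable ι] [MeasurableSpace α] {μ : Measure α}
  [NormedAddCommGroup E] {A : ι → Set α} {f : α → E} {v : ι → E}

theorem setIntegral_eq_of_eqOn_const [NormedSpace ℝ E] [CompleteSpace E] {s : Set α} {c : E}
    (hs : MeasurableSet s) (hf : EqOn f (fun _ => c) s) : ∫ x in s, f x ∂μ = μ.real s • c := by
  rw [setIntegral_congr_fun hs hf, setIntegral_const]

theorem integrable_of_eqOn_const_of_summable (hA : ∀ p, MeasurableSet (A p))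
    (hfin : ∀ p, μ (A p) ≠ ⊤) (hf : ∀ p, EqOn f (fun _ => v p) (A p))
    (hf0 : ∀ x ∉ ⋃ p, A p, f x = 0) (hsum : Summable fun p => μ.real (A p) * ‖v p‖) :
    Integrable f μ := by
  have hOn : ∀ p, IntegrableOn f (A p) μ := fun p =>
    (integrableOn_const (hfin p)).congr_fun (hf p).symm (hA p)
  have hnorm : ∀ p, ∫ x in A p, ‖f x‖ ∂μ = μ.real (A p) * ‖v p‖ := fun p =>
    setIntegral_eq_of_eqOn_const (hA p) fun x hx => by simp only [hf p hx]
  exact (integrableOn_iUnion_of_summable_integral_norm hOn (by simpa only [hnorm] using hsum))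
    |>.integrable_of_forall_notMem_eq_zero hf0

theorem hasSum_integral_of_eqOn_const [NormedSpace ℝ E] [CompleteSpace E]
    (hA : ∀ p, MeasurableSet (A p)) (hd : Pairwise (Disjoint on A))
    (hf : ∀ p, EqOn f (fun _ => v p) (A p))
    (hf0 : ∀ x ∉ ⋃ p, A p, f x = 0) (hfi : Integrable f μ) :
    HasSum (fun p => μ.real (A p) • v p) (∫ x, f x ∂μ) := by
  rw [← setIntegral_eq_integral_of_forall_compl_eq_zero hf0]
  simpa only [setIntegral_eq_of_eqOn_const (hA _) (hf _)] using
    hasSum_integral_iUnion hA hd hfi.integrableOn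

end PiecewiseConstant

theorem hasSum_mul_single_snd {α β : Type*} [DecidableEq β] {f : α × β → ℝ} (hf : Summable f)
    (i : β) : HasSum (fun p => f p * (Pi.single p.2 1 : β → ℝ) i) (∑' j, f (j, i)) := by
  rw [← (Prod.mk_left_injective i).hasSum_iff]
  · simpa [comp_def] using (hf.comp_injective (Prod.mk_left_injective i)).hasSum
  · rintro ⟨j, k⟩ hp
    have hk : i ≠ k := fun h => hp ⟨j, by rw [h]⟩
    simp [hk]

theorem hasSum_mul_single_fst {α β : Type*} [DecidableEq α] {f : α × β → ℝ} (hf : Summable f)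
    (i : α) : HasSum (fun p => f p * (Pi.single p.1 1 : α → ℝ) i) (∑' k, f (i, k)) := by
  rw [← (Prod.mk_right_injective i).hasSum_iff]
  · simpa [comp_def] using (hf.comp_injective (Prod.mk_right_injective i)).hasSum
  · rintro ⟨j, k⟩ hp
    have hj : i ≠ j := fun h => hp ⟨k, by rw [h]⟩
    simp [hj]

theorem pairwise_disjoint_Ioc_natCast_mul {K : ℝ} :
    Pairwise (Disjoint on fun j : ℕ => Ioc (j * K) ((j + 1) * K)) := by
  intro j k hjk
  simpa [onFun, zsmul_eq_mul] using
    pairwise_disjoint_Ioc_add_zsmul (0 : ℝ) K (Nat.cast_injective.ne hjk : (j : ℤ) ≠ k)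

theorem apply_le_one_of_mem_simplexS {q : H2} (hq : q ∈ simplexS) (i : ℕ) : q i ≤ 1 :=
  le_hasSum hq.2 i fun j _ => hq.1 j

theorem norm_lp_single_sub_single_le (i j : ℕ) :
    ‖(lp.single 2 j 1 - lp.single 2 i 1 : H2)‖ ≤ 2 := by
  refine (norm_sub_le _ _).trans ?_
  rw [lp.norm_single two_pos, lp.norm_single two_pos]
  norm_num

theorem measure_Aset_ne_top (K : ℝ) (Γ : H2 → ℕ → ℕ → ℝ) (q : H2) (i j : ℕ) :
    volume (Aset K Γ q i j) ≠ ⊤ :=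
  (Metric.isBounded_Ioc _ _ |>.prod (Metric.isBounded_Ioc _ _)).measure_lt_top.ne

theorem Gmap_eq_zero_of_notMem {K : ℝ} {Γ : H2 → ℕ → ℕ → ℝ} {q : H2} {y : ℝ × ℝ}
    (hy : y ∉ ⋃ p : ℕ × ℕ, Aset K Γ q p.1 p.2) : Gmap K Γ q y = 0 := by
  simp only [Gmap]
  rw [dif_neg]
  rintro ⟨p, -, hp⟩
  exact hy (mem_iUnion.2 ⟨p, hp⟩)

namespace RateMatrix

variable {K : ℝ} {Γ : H2 → ℕ → ℕ → ℝ} {q : H2} (hΓ : RateMatrix K Γ) (hq : q ∈ simplexS)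
include hΓ hq

theorem bound_nonneg : 0 ≤ K := (abs_nonneg _).trans (hΓ.bound q hq 0)

theorem offDiag_nonneg (i j : ℕ) : 0 ≤ if j = i then 0 else Γ q i j := by
  split_ifs with h
  · exact le_rfl
  · exact hΓ.nonneg q hq i j (Ne.symm h)

theorem diag_nonpos (i : ℕ) : Γ q i i ≤ 0 :=
  neg_nonneg.1 <| (hΓ.diag q hq i).nonneg (hΓ.offDiag_nonneg hq i)

theorem le_neg_diag {i j : ℕ} (hij : i ≠ j) : Γ q i j ≤ -Γ q i i := by
  simpa [if_neg hij.symm] using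
    le_hasSum (hΓ.diag q hq i) j fun k _ => hΓ.offDiag_nonneg hq i k

theorem mul_le_bound (i j : ℕ) : q i * Γ q i j ≤ K := by
  rcases eq_or_ne i j with rfl | hij
  · exact (mul_nonpos_of_nonneg_of_nonpos (hq.1 i) (hΓ.diag_nonpos hq i)).trans
      (hΓ.bound_nonneg hq)
  · calc q i * Γ q i j ≤ 1 * Γ q i j :=
          mul_le_mul_of_nonneg_right (apply_le_one_of_mem_simplexS hq i) (hΓ.nonneg q hq i j hij)
      _ ≤ K := by
          rw [one_mul]
          exact (hΓ.le_neg_diag hq hij).trans ((neg_le_abs _).trans (hΓ.bound q hq i))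

theorem Aset_self (i : ℕ) : Aset K Γ q i i = ∅ := by
  have hdiag := mul_nonpos_of_nonneg_of_nonpos (hq.1 i) (hΓ.diag_nonpos hq i)
  exact prod_eq_empty_iff.2 (Or.inr (Ioc_eq_empty_of_le (by linarith)))

theorem Aset_subset (i j : ℕ) :
    Aset K Γ q i j ⊆ Ioc (i : ℝ) (i + 1) ×ˢ Ioc ((j : ℝ) * K) ((j + 1) * K) :=
  prod_mono subset_rfl (Ioc_subset_Ioc_right (by linarith [hΓ.mul_le_bound hq i j]))

theorem pairwise_disjoint_Aset :
    Pairwise (Disjoint on fun p : ℕ × ℕ => Aset K Γ q p.1 p.2) := by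
  rintro ⟨i, j⟩ ⟨i', j'⟩ hne
  refine Disjoint.mono (hΓ.Aset_subset hq i j) (hΓ.Aset_subset hq i' j') (disjoint_prod.2 ?_)
  by_cases hi : i = i'
  · exact Or.inr (pairwise_disjoint_Ioc_natCast_mul fun hj => hne (by rw [hi, hj]))
  · exact Or.inl (by simpa using pairwise_disjoint_Ioc_natCast_mul (K := 1) hi)

theorem measureReal_Aset (i j : ℕ) :
    volume.real (Aset K Γ q i j) = if i = j then 0 else q i * Γ q i j := by
  split_ifs with h
  · rw [h, hΓ.Aset_self hq, measureReal_empty]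
  · rw [Aset, Measure.volume_eq_prod, measureReal_prod_prod, Real.volume_real_Ioc,
      Real.volume_real_Ioc]
    simp [mul_nonneg (hq.1 i) (hΓ.nonneg q hq i j h)]

theorem measureReal_Aset_row (i k : ℕ) :
    volume.real (Aset K Γ q i k) = q i * if k = i then 0 else Γ q i k := by
  rw [hΓ.measureReal_Aset hq]
  split_ifs <;> simp_all [eq_comm]

theorem summable_measureReal_Aset :
    Summable fun p : ℕ × ℕ => volume.real (Aset K Γ q p.1 p.2) := by
  have hrow (i : ℕ) : HasSum (fun k => volume.real (Aset K Γ q i k)) (q i * -Γ q i i) := by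
    simpa only [hΓ.measureReal_Aset_row hq] using (hΓ.diag q hq i).mul_left (q i)
  refine (summable_prod_of_nonneg fun _ => measureReal_nonneg).2 ⟨fun i => (hrow i).summable, ?_⟩
  simp only [(hrow _).tsum_eq]
  exact (hq.2.summable.mul_right K).of_nonneg_of_le
    (fun i => mul_nonneg (hq.1 i) (neg_nonneg.2 (hΓ.diag_nonpos hq i)))
    (fun i => mul_le_mul_of_nonneg_left ((neg_le_abs _).trans (hΓ.bound q hq i)) (hq.1 i))

theorem Gmap_eq_of_mem {p : ℕ × ℕ} {y : ℝ × ℝ} (hy : y ∈ Aset K Γ q p.1 p.2) :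
    Gmap K Γ q y = lp.single 2 p.2 1 - lp.single 2 p.1 1 := by
  have hp : p.1 ≠ p.2 := fun h => by rwa [h, hΓ.Aset_self hq] at hy
  have hex : ∃ p : ℕ × ℕ, p.1 ≠ p.2 ∧ y ∈ Aset K Γ q p.1 p.2 := ⟨p, hp, hy⟩
  have hchoose : hex.choose = p := by
    by_contra hne
    exact disjoint_left.1 (hΓ.pairwise_disjoint_Aset hq hne) hex.choose_spec.2 hy
  simp only [Gmap]
  rw [dif_pos hex, hchoose]

theorem integrable_Gmap : Integrable (Gmap K Γ q) := by
  refine integrable_of_eqOn_const_of_summable (A := fun p : ℕ × ℕ => Aset K Γ q p.1 p.2)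
    (fun _ => measurableSet_Ioc.prod measurableSet_Ioc) (fun p => measure_Aset_ne_top K Γ q p.1 p.2)
    (fun _ _ hy => hΓ.Gmap_eq_of_mem hq hy) (fun _ hy => Gmap_eq_zero_of_notMem hy) ?_
  exact ((hΓ.summable_measureReal_Aset hq).mul_right 2).of_nonneg_of_le
    (fun _ => mul_nonneg measureReal_nonneg (norm_nonneg _))
    (fun p => mul_le_mul_of_nonneg_left (norm_lp_single_sub_single_le p.1 p.2) measureReal_nonneg)

theorem hasSum_integral_Gmap :
    HasSum (fun p : ℕ × ℕ => volume.real (Aset K Γ q p.1 p.2) •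
      (lp.single 2 p.2 1 - lp.single 2 p.1 1 : H2)) (∫ y, Gmap K Γ q y) :=
  hasSum_integral_of_eqOn_const (fun _ => measurableSet_Ioc.prod measurableSet_Ioc)
    (hΓ.pairwise_disjoint_Aset hq) (fun _ _ hy => hΓ.Gmap_eq_of_mem hq hy)
    (fun _ hy => Gmap_eq_zero_of_notMem hy) (hΓ.integrable_Gmap hq)

theorem integral_Gmap_apply (i : ℕ) :
    (∫ y, Gmap K Γ q y) i = (∑' j, if j = i then 0 else q j * Γ q j i)
      - q i * ∑' j, if j = i then 0 else Γ q i j := by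
  have hs := hΓ.summable_measureReal_Aset hq
  refine ((hΓ.hasSum_integral_Gmap hq).mapL (lp.evalCLM ℝ (fun _ : ℕ => ℝ) 2 i)).unique ?_
  convert (hasSum_mul_single_snd hs i).sub (hasSum_mul_single_fst hs i) using 1
  · funext p
    simp [lp.evalCLM, mul_sub]
  · rw [← tsum_mul_left]
    congr 1
    · exact tsum_congr fun j => (hΓ.measureReal_Aset hq j i).symm
    · exact tsum_congr fun k => (hΓ.measureReal_Aset_row hq i k).symm

theorem summable_column (i : ℕ) : Summable fun j => q j * Γ q j i := by
  have h := ((hΓ.summable_measureReal_Aset hq).comp_injective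
    (Prod.mk_left_injective i)).update i (q i * Γ q i i)
  refine h.congr fun j => ?_
  rcases eq_or_ne j i with rfl | hj
  · simp
  · simp [hj, hΓ.measureReal_Aset hq]

theorem tsum_column_eq (i : ℕ) :
    ∑' j, q j * Γ q j i = (∑' j, if j = i then 0 else q j * Γ q j i)
      - q i * ∑' j, if j = i then 0 else Γ q i j := by
  rw [(hΓ.summable_column hq i).tsum_eq_add_tsum_ite i, (hΓ.diag q hq i).tsum_eq]
  ring

end RateMatrix

theorem stmt8_general (K : ℝ) (Γ : H2 → ℕ → ℕ → ℝ) (hΓ : RateMatrix K Γ)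
    (q : H2) (hq : q ∈ simplexS) :
    (∀ i, Integrable (fun y : ℝ × ℝ => Gmap K Γ q y i) volume ∧
      (∫ y : ℝ × ℝ, Gmap K Γ q y i) =
        (∑' j, if j = i then 0 else q j * Γ q j i)
          - q i * (∑' j, if j = i then 0 else Γ q i j) ∧
      (∫ y : ℝ × ℝ, Gmap K Γ q y i) = ∑' j, q j * Γ q j i) ∧
    Integrable (fun y : ℝ × ℝ => Gmap K Γ q y) volume ∧
    ∃ bq : H2, (∀ i, bq i = ∑' j, q j * Γ q j i) ∧
      (∫ y : ℝ × ℝ, Gmap K Γ q y) = bq := by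
  have hG := hΓ.integrable_Gmap hq
  have hcoord (i : ℕ) : ∫ y, Gmap K Γ q y i = (∫ y, Gmap K Γ q y) i :=
    (lp.evalCLM ℝ (fun _ : ℕ => ℝ) 2 i).integral_comp_comm hG
  refine ⟨fun i => ⟨(lp.evalCLM ℝ (fun _ : ℕ => ℝ) 2 i).integrable_comp hG, ?_, ?_⟩, hG,
    ∫ y, Gmap K Γ q y, fun i => ?_, rfl⟩
  · rw [hcoord, hΓ.integral_Gmap_apply hq]
  · rw [hcoord, hΓ.integral_Gmap_apply hq, hΓ.tsum_column_eq hq]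
  · rw [hΓ.integral_Gmap_apply hq, hΓ.tsum_column_eq hq]

/-- For `q ∈ Ŝ`: each coordinate `y ↦ G_i(q,y)` is Lebesgue integrable on `X` with
`∫_X G_i(q,y) dy = ∑_{j≠i} q_j Γ_ji(q) − q_i ∑_{j≠i} Γ_ij(q) = ∑_j q_j Γ_ji(q)`;
moreover `y ↦ G(q,y)` is Bochner integrable with values in `ℓ²(ℕ)` and
`∫_X G(q,y) dy = b(q)` where `b(q)_i = ∑_j q_j Γ_ji(q)`. -/
theorem stmt8 (K : ℝ) (hK0 : 0 ≤ K) (Γ : H2 → ℕ → ℕ → ℝ) (hΓ : RateMatrix K Γ)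
    (q : H2) (hq : q ∈ simplexS) :
    (∀ i, Integrable (fun y : ℝ × ℝ => Gmap K Γ q y i) volume ∧
      (∫ y : ℝ × ℝ, Gmap K Γ q y i) =
        (∑' j, if j = i then 0 else q j * Γ q j i)
          - q i * (∑' j, if j = i then 0 else Γ q i j) ∧
      (∫ y : ℝ × ℝ, Gmap K Γ q y i) = ∑' j, q j * Γ q j i) ∧
    Integrable (fun y : ℝ × ℝ => Gmap K Γ q y) volume ∧
    ∃ bq : H2, (∀ i, bq i = ∑' j, q j * Γ q j i) ∧
      (∫ y : ℝ × ℝ, Gmap K Γ q y) = bq :=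
  stmt8_general K Γ hΓ q hq
end
end

section
/- For every n ∈ ℕ there exists a constant γ̂_n ∈ (0,∞), depending only on n, with the following property: for every probability vector p = (p_i)_{i∈ℕ} on ℕ, every m ∈ ℕ, and every family ξ_1, …, ξ_m of i.i.d. ℕ-valued random variables with P(ξ_j = i) = p_i, one has E[(∑_{i=1}^∞ (μ_i^m − p_i)²)^n] ≤ γ̂_n / m^n, where μ_i^m := (1/m) ∑_{j=1}^m 1{ξ_j = i}. -/
/-!
Since `μ^m - p = (1/m) ∑_j (δ_{ξ_j} - p)`, the squared `ℓ²` distance equals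
`m⁻² ∑_{j,k} K(ξ_j, ξ_k)` for the kernel `K(x, y) = ⟪δ_x - p, δ_y - p⟫`, which is bounded by `2`
and degenerate: `E K(ξ_j, c) = 0` for every `c`. Expanding the `n`-th power gives `m^{-2n}` times
a sum, over words `w` of length `2n` in the sample indices, of `E ∏ K`. If some index occurs only
once in `w`, independence and degeneracy make the term vanish; the remaining words use at most `n`
distinct indices, so there are at most `n^{2n} m^n` of them, each contributing at most `2^n`.
-/

open MeasureTheory ProbabilityTheory Finset

namespace EmpiricalFrequencies

section Kernel

variable {α : Type*} {p : α → ℝ}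

section ProbabilityVector

variable (hp0 : ∀ i, 0 ≤ p i) (hp1 : HasSum p 1)
include hp0 hp1

theorem le_one_of_hasSum_one (i : α) : p i ≤ 1 := le_hasSum hp1 i fun j _ => hp0 j

theorem summable_sq_of_hasSum_one : Summable fun i => p i ^ 2 :=
  .of_nonneg_of_le (fun i => sq_nonneg _)
    (fun i => by nlinarith [hp0 i, le_one_of_hasSum_one hp0 hp1 i]) hp1.summable

theorem tsum_sq_le_one : ∑' i, p i ^ 2 ≤ 1 :=
  hp1.tsum_eq ▸ (summable_sq_of_hasSum_one hp0 hp1).tsum_le_tsum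
    (fun i => by nlinarith [hp0 i, le_one_of_hasSum_one hp0 hp1 i]) hp1.summable

end ProbabilityVector

variable [DecidableEq α]

/-- The `ℓ²` inner product `⟪δ_x - p, δ_y - p⟫`. -/
noncomputable def centeredKernel (p : α → ℝ) (x y : α) : ℝ :=
  (if x = y then 1 else 0) - p x - p y + ∑' i, p i ^ 2

theorem centeredKernel_comm (x y : α) : centeredKernel p x y = centeredKernel p y x := by
  simp only [centeredKernel, eq_comm (a := x)]
  ring

theorem prod_centeredKernel_eq_mul_prod_erase {T : Type*} [Fintype T] [DecidableEq T]
    (u : T × Bool → α) (x : T × Bool) :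
    ∏ t, centeredKernel p (u (t, false)) (u (t, true))
      = centeredKernel p (u x) (u (x.1, !x.2))
        * ∏ t ∈ univ.erase x.1, centeredKernel p (u (t, false)) (u (t, true)) := by
  rw [← mul_prod_erase univ _ (mem_univ x.1)]
  obtain ⟨t, _ | _⟩ := x
  · simp
  · simp [centeredKernel_comm]

theorem hasSum_ite_eq_mul (a : α) (f : α → ℝ) :
    HasSum (fun i => (if a = i then 1 else 0) * f i) (f a) := by
  convert hasSum_ite_eq a (f a) using 1
  ext i
  split_ifs <;> simp_all [eq_comm]

variable (hp0 : ∀ i, 0 ≤ p i) (hp1 : HasSum p 1)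
include hp0 hp1

theorem abs_centeredKernel_le (x y : α) : |centeredKernel p x y| ≤ 2 := by
  have := le_one_of_hasSum_one hp0 hp1 x
  have := le_one_of_hasSum_one hp0 hp1 y
  have := tsum_sq_le_one hp0 hp1
  have : 0 ≤ ∑' i, p i ^ 2 := tsum_nonneg fun i => sq_nonneg _
  rw [abs_le, centeredKernel]
  split_ifs <;> constructor <;> linarith [hp0 x, hp0 y]

theorem hasSum_centeredKernel (a b : α) :
    HasSum (fun i => ((if a = i then 1 else 0) - p i) * ((if b = i then 1 else 0) - p i))
      (centeredKernel p a b) := by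
  have h := (((hasSum_ite_eq_mul a fun i => if b = i then 1 else 0).sub
    (hasSum_ite_eq_mul a p)).sub (hasSum_ite_eq_mul b p)).add
    (summable_sq_of_hasSum_one hp0 hp1).hasSum
  rw [show centeredKernel p a b = (if b = a then 1 else 0) - p a - p b + ∑' i, p i ^ 2 by
    simp only [centeredKernel, eq_comm (a := b)]]
  exact h.congr_fun fun i => by ring

theorem hasSum_mul_centeredKernel (c : α) :
    HasSum (fun i => p i * centeredKernel p i c) 0 := by
  have h := (((hasSum_ite_eq_mul c p).sub (summable_sq_of_hasSum_one hp0 hp1).hasSum).sub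
    (hp1.mul_right (p c))).add (hp1.mul_right (∑' i, p i ^ 2))
  rw [show p c - ∑' i, p i ^ 2 - 1 * p c + 1 * ∑' i, p i ^ 2 = 0 by ring] at h
  exact h.congr_fun fun i => by
    simp only [centeredKernel, eq_comm (a := i)]
    ring

theorem tsum_sq_empirical_sub_eq {ι : Type*} [Fintype ι] [Nonempty ι] (a : ι → α) :
    ∑' i, ((1 / (Fintype.card ι : ℝ)) * ∑ j, (if a j = i then 1 else 0) - p i) ^ 2
      = (1 / (Fintype.card ι : ℝ)) ^ 2 * ∑ q : ι × ι, centeredKernel p (a q.1) (a q.2) := by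
  have hN : (Fintype.card ι : ℝ) ≠ 0 := Nat.cast_ne_zero.2 Fintype.card_ne_zero
  have hsq : ∀ i, ((1 / (Fintype.card ι : ℝ)) * ∑ j, (if a j = i then 1 else 0) - p i) ^ 2
      = (1 / (Fintype.card ι : ℝ)) ^ 2 * ∑ q : ι × ι,
          ((if a q.1 = i then 1 else 0) - p i) * ((if a q.2 = i then 1 else 0) - p i) := by
    intro i
    have hcenter : (1 / (Fintype.card ι : ℝ)) * ∑ j, (if a j = i then 1 else 0) - p i
        = (1 / (Fintype.card ι : ℝ)) * ∑ j, ((if a j = i then 1 else 0) - p i) := by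
      rw [sum_sub_distrib, sum_const, card_univ, nsmul_eq_mul]
      field_simp
    rw [hcenter, mul_pow, sq (∑ j, _), sum_mul_sum, ← Fintype.sum_prod_type']
  rw [tsum_congr hsq]
  exact ((hasSum_sum fun q _ => hasSum_centeredKernel hp0 hp1 (a q.1) (a q.2)).mul_left _).tsum_eq

theorem abs_prod_centeredKernel_le {T : Type*} (s : Finset T) (u v : T → α) :
    |∏ t ∈ s, centeredKernel p (u t) (v t)| ≤ 2 ^ #s := by
  rw [abs_prod]
  exact (prod_le_prod (fun _ _ => abs_nonneg _)
    fun t _ => abs_centeredKernel_le hp0 hp1 (u t) (v t)).trans_eq (prod_const 2)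

end Kernel

theorem sum_prod_pow_eq_sum_prod {β R : Type*} [Fintype β] [CommSemiring R] (f : β → β → R)
    (n : ℕ) :
    (∑ q : β × β, f q.1 q.2) ^ n = ∑ w : Fin n × Bool → β, ∏ t, f (w (t, false)) (w (t, true)) := by
  rw [Fintype.sum_pow]
  exact Fintype.sum_equiv ((Equiv.curry _ _ _).trans
    (Equiv.arrowCongr (.refl _) (Equiv.boolArrowEquivProd β))).symm _ _ fun v => by simp

section Counting

variable {κ β : Type*} [Fintype κ] [DecidableEq β]

theorem exists_comp_eq_of_card_image_le [Nonempty β] {w : κ → β} {k : ℕ}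
    (hw : #(univ.image w) ≤ k) : ∃ (c : κ → Fin k) (f : Fin k → β), f ∘ c = w := by
  let e : univ.image w ↪ Fin k := (univ.image w).equivFin.toEmbedding.trans (Fin.castLEEmb hw)
  refine ⟨fun x => e ⟨w x, mem_image_of_mem w (mem_univ x)⟩,
    Function.extend e (↑) fun _ => Classical.arbitrary β, funext fun x => ?_⟩
  exact e.injective.extend_apply _ _ _

theorem card_filter_card_image_le [DecidableEq κ] [Fintype β] [Nonempty β] (k : ℕ) :
    #{w : κ → β | #(univ.image w) ≤ k} ≤ k ^ Fintype.card κ * Fintype.card β ^ k := by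
  calc #{w : κ → β | #(univ.image w) ≤ k}
      ≤ #(univ.image fun cf : (κ → Fin k) × (Fin k → β) => cf.2 ∘ cf.1) := by
        refine card_le_card fun w hw => ?_
        obtain ⟨c, f, rfl⟩ := exists_comp_eq_of_card_image_le (mem_filter.1 hw).2
        exact mem_image_of_mem _ (mem_univ (c, f))
    _ ≤ k ^ Fintype.card κ * Fintype.card β ^ k := by
        refine card_image_le.trans_eq ?_
        simp

theorem two_mul_card_image_le {w : κ → β} (hw : ∀ x, ∃ y ≠ x, w y = w x) :
    2 * #(univ.image w) ≤ Fintype.card κ := by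
  refine mul_card_image_le_card univ 2 fun b hb => ?_
  obtain ⟨x, -, rfl⟩ := mem_image.1 hb
  obtain ⟨y, hyx, hy⟩ := hw x
  exact one_lt_card.2 ⟨x, by simp, y, by simp [hy], hyx.symm⟩

theorem card_filter_forall_exists_ne_eq_le [DecidableEq κ] [Fintype β] [Nonempty β] :
    #{w : κ → β | ∀ x, ∃ y ≠ x, w y = w x}
      ≤ (Fintype.card κ / 2) ^ Fintype.card κ * Fintype.card β ^ (Fintype.card κ / 2) := by
  refine (card_le_card fun w hw => ?_).trans (card_filter_card_image_le _)
  have := two_mul_card_image_le (mem_filter.1 hw).2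
  simp only [mem_filter, mem_univ, true_and]
  omega

end Counting

section Moments

variable {Ω α : Type*} {mΩ : MeasurableSpace Ω} {P : Measure Ω}

theorem integral_comp_eq_zero_of_indepFun [IsFiniteMeasure P] {β : Type*} [MeasurableSpace α]
    [MeasurableSpace β] {Y : Ω → α} {Z : Ω → β} (hY : Measurable Y) (hZ : Measurable Z)
    (hYZ : IndepFun Y Z P)
    {Φ : α × β → ℝ} (hΦ : Integrable Φ ((P.map Y).prod (P.map Z)))
    (hΦ0 : ∀ z, ∫ a, Φ (a, z) ∂(P.map Y) = 0) :
    ∫ ω, Φ (Y ω, Z ω) ∂P = 0 := by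
  have hmap := (indepFun_iff_map_prod_eq_prod_map_map hY.aemeasurable hZ.aemeasurable).1 hYZ
  calc ∫ ω, Φ (Y ω, Z ω) ∂P = ∫ q, Φ q ∂(P.map fun ω => (Y ω, Z ω)) :=
        (integral_map (hY.prodMk hZ).aemeasurable (hmap ▸ hΦ.aestronglyMeasurable)).symm
    _ = ∫ z, ∫ a, Φ (a, z) ∂(P.map Y) ∂(P.map Z) := by rw [hmap, integral_prod_symm Φ hΦ]
    _ = 0 := by simp [hΦ0]

variable [MeasurableSpace α] [MeasurableSingletonClass α] [Countable α] {p : α → ℝ}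

theorem integral_map_eq_tsum {Y : Ω → α} (hY : Measurable Y) (hp0 : ∀ i, 0 ≤ p i)
    (hlaw : ∀ a, P {ω | Y ω = a} = ENNReal.ofReal (p a)) {f : α → ℝ}
    (hf : Integrable f (P.map Y)) :
    ∫ a, f a ∂(P.map Y) = ∑' a, p a * f a := by
  rw [integral_countable hf]
  refine tsum_congr fun a => ?_
  rw [smul_eq_mul, measureReal_def, Measure.map_apply hY (measurableSet_singleton a)]
  simp_rw [Set.preimage, Set.mem_singleton_iff, hlaw, ENNReal.toReal_ofReal (hp0 a)]

variable [DecidableEq α]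

theorem integral_centeredKernel_map_eq_zero {Y : Ω → α} (hY : Measurable Y)
    [IsFiniteMeasure P] (hp0 : ∀ i, 0 ≤ p i) (hp1 : HasSum p 1)
    (hlaw : ∀ a, P {ω | Y ω = a} = ENNReal.ofReal (p a)) (c : α) :
    ∫ a, centeredKernel p a c ∂(P.map Y) = 0 := by
  have hint : Integrable (fun a => centeredKernel p a c) (P.map Y) :=
    .of_bound (measurable_of_countable _).aestronglyMeasurable 2
      (.of_forall fun a => abs_centeredKernel_le hp0 hp1 a c)
  rw [integral_map_eq_tsum hY hp0 hlaw hint, (hasSum_mul_centeredKernel hp0 hp1 c).tsum_eq]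

theorem integral_prod_centeredKernel_eq_zero (hp0 : ∀ i, 0 ≤ p i) (hp1 : HasSum p 1)
    {ι T : Type*} [Fintype ι] [DecidableEq ι] [Fintype T] [DecidableEq T]
    {ξ : ι → Ω → α} (hmeas : ∀ j, Measurable (ξ j)) (hindep : iIndepFun ξ P)
    (hlaw : ∀ j a, P {ω | ξ j ω = a} = ENNReal.ofReal (p a))
    {w : T × Bool → ι} {x : T × Bool} (hx : ∀ y, w y = w x → y = x) :
    ∫ ω, ∏ t, centeredKernel p (ξ (w (t, false)) ω) (ξ (w (t, true)) ω) ∂P = 0 := by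
  have := hindep.isProbabilityMeasure
  set j₀ := w x
  set c := w (x.1, !x.2)
  have hne : ∀ y, y ≠ x → w y ≠ j₀ := fun y hy h => hy (hx y h)
  have hc : c ≠ j₀ := hne _ (by simp [Prod.ext_iff])
  -- `ξ` with coordinate `j₀` overwritten: independent of `ξ j₀`, yet equal to `ξ` at every
  -- `w y` with `y ≠ x`.
  let Z : Ω → ι → α := fun ω j => ξ (if j = j₀ then c else j) ω
  have hYZ : IndepFun (ξ j₀) Z P := by
    let ψ : (univ.erase j₀ → α) → ι → α := fun u j =>
      u ⟨if j = j₀ then c else j, mem_erase.2 ⟨by split_ifs <;> assumption, mem_univ _⟩⟩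
    have := (hindep.indepFun_finset {j₀} (univ.erase j₀) (by simp) hmeas).comp
      (measurable_pi_apply ⟨j₀, mem_singleton_self j₀⟩) (measurable_of_countable ψ)
    exact this
  let R : (ι → α) → ℝ := fun z =>
    ∏ t ∈ univ.erase x.1, centeredKernel p (z (w (t, false))) (z (w (t, true)))
  let Φ : α × (ι → α) → ℝ := fun q => centeredKernel p q.1 (q.2 c) * R q.2
  have hΦ : Integrable Φ ((P.map (ξ j₀)).prod (P.map Z)) := by
    refine .of_bound (measurable_of_countable Φ).aestronglyMeasurable (2 * 2 ^ #(univ.erase x.1))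
      (.of_forall fun q => ?_)
    rw [Real.norm_eq_abs, abs_mul]
    exact mul_le_mul (abs_centeredKernel_le hp0 hp1 _ _) (abs_prod_centeredKernel_le hp0 hp1 _ _ _)
      (abs_nonneg _) zero_le_two
  have hZ : ∀ ω y, y ≠ x → Z ω (w y) = ξ (w y) ω := fun ω y hy => by simp [Z, hne y hy]
  calc ∫ ω, ∏ t, centeredKernel p (ξ (w (t, false)) ω) (ξ (w (t, true)) ω) ∂P
      = ∫ ω, Φ (ξ j₀ ω, Z ω) ∂P := by
        refine integral_congr_ae (.of_forall fun ω => ?_)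
        have hx' : ((x.1, !x.2) : T × Bool) ≠ x := by simp [Prod.ext_iff]
        have hpos : ∀ t ∈ univ.erase x.1, ∀ b, ((t, b) : T × Bool) ≠ x := fun t ht b h =>
          (mem_erase.1 ht).1 (congrArg Prod.fst h)
        show ∏ t, centeredKernel p (ξ (w (t, false)) ω) (ξ (w (t, true)) ω)
          = centeredKernel p (ξ j₀ ω) (Z ω c) * R (Z ω)
        rw [prod_centeredKernel_eq_mul_prod_erase (fun y => ξ (w y) ω) x, hZ ω _ hx']
        exact congrArg _ (prod_congr rfl fun t ht => by
          rw [hZ ω _ (hpos t ht true), hZ ω _ (hpos t ht false)])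
    _ = 0 := by
        refine integral_comp_eq_zero_of_indepFun (hmeas j₀)
          (measurable_pi_lambda _ fun _ => hmeas _) hYZ hΦ fun z => ?_
        show ∫ a, centeredKernel p a (z c) * R z ∂(P.map (ξ j₀)) = 0
        rw [integral_mul_const, integral_centeredKernel_map_eq_zero (hmeas j₀) hp0 hp1 (hlaw j₀),
          zero_mul]

theorem integrable_prod_centeredKernel [IsFiniteMeasure P] (hp0 : ∀ i, 0 ≤ p i)
    (hp1 : HasSum p 1) {ι T : Type*} [Fintype T] {ξ : ι → Ω → α} (hmeas : ∀ j, Measurable (ξ j))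
    (w : T × Bool → ι) :
    Integrable (fun ω => ∏ t, centeredKernel p (ξ (w (t, false)) ω) (ξ (w (t, true)) ω)) P := by
  refine .of_bound (Finset.measurable_prod _ fun t _ => ?_).aestronglyMeasurable (2 ^ #univ)
    (.of_forall fun ω => abs_prod_centeredKernel_le hp0 hp1 univ _ _)
  exact (measurable_of_countable fun q : α × α => centeredKernel p q.1 q.2).comp
    ((hmeas _).prodMk (hmeas _))

theorem sum_integral_prod_centeredKernel_le (hp0 : ∀ i, 0 ≤ p i) (hp1 : HasSum p 1)
    {ι : Type*} [Fintype ι] [DecidableEq ι] [Nonempty ι]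
    {ξ : ι → Ω → α} (hmeas : ∀ j, Measurable (ξ j)) (hindep : iIndepFun ξ P)
    (hlaw : ∀ j a, P {ω | ξ j ω = a} = ENNReal.ofReal (p a)) (n : ℕ) :
    ∑ w : Fin n × Bool → ι, ∫ ω, ∏ t, centeredKernel p (ξ (w (t, false)) ω) (ξ (w (t, true)) ω) ∂P
      ≤ (n : ℝ) ^ (2 * n) * Fintype.card ι ^ n * 2 ^ n := by
  have := hindep.isProbabilityMeasure
  have hcard := card_filter_forall_exists_ne_eq_le (κ := Fin n × Bool) (β := ι)
  simp only [Fintype.card_prod, Fintype.card_fin, Fintype.card_bool,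
    Nat.mul_div_cancel n two_pos] at hcard
  rw [mul_comm n 2] at hcard
  rw [← sum_filter_of_ne (p := fun w : Fin n × Bool → ι => ∀ x, ∃ y ≠ x, w y = w x)
    fun w _ hw => ?_]
  · calc _ ≤ ∑ _w ∈ {w : Fin n × Bool → ι | ∀ x, ∃ y ≠ x, w y = w x}, (2 : ℝ) ^ n := by
          refine sum_le_sum fun w _ => (le_abs_self _).trans ?_
          simpa using norm_integral_le_of_norm_le_const (μ := P)
            (.of_forall fun ω => (Real.norm_eq_abs _).trans_le
              (abs_prod_centeredKernel_le hp0 hp1 univ (fun t => ξ (w (t, false)) ω)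
                fun t => ξ (w (t, true)) ω))
      _ ≤ (n : ℝ) ^ (2 * n) * Fintype.card ι ^ n * 2 ^ n := by
          rw [sum_const, nsmul_eq_mul]
          gcongr
          exact_mod_cast hcard
  · intro x
    by_contra! hx
    exact hw (integral_prod_centeredKernel_eq_zero hp0 hp1 hmeas hindep hlaw
      fun y hy => by_contra fun h => hx y h hy)

theorem lintegral_pow_tsum_sq_empirical_sub_le (hp0 : ∀ i, 0 ≤ p i) (hp1 : HasSum p 1)
    {ι : Type*} [Fintype ι] [DecidableEq ι] [Nonempty ι]
    {ξ : ι → Ω → α} (hmeas : ∀ j, Measurable (ξ j)) (hindep : iIndepFun ξ P)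
    (hlaw : ∀ j a, P {ω | ξ j ω = a} = ENNReal.ofReal (p a)) (n : ℕ) :
    ∫⁻ ω, ENNReal.ofReal ((∑' i, ((1 / (Fintype.card ι : ℝ)) * ∑ j,
        (if ξ j ω = i then (1 : ℝ) else 0) - p i) ^ 2) ^ n) ∂P
      ≤ ENNReal.ofReal ((n : ℝ) ^ (2 * n) * 2 ^ n / (Fintype.card ι : ℝ) ^ n) := by
  have := hindep.isProbabilityMeasure
  set N := (Fintype.card ι : ℝ)
  have hN : N ≠ 0 := Nat.cast_ne_zero.2 Fintype.card_ne_zero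
  have hexpand : ∀ ω, (∑' i, ((1 / N) * ∑ j, (if ξ j ω = i then (1 : ℝ) else 0) - p i) ^ 2) ^ n
      = (1 / N) ^ (2 * n) * ∑ w : Fin n × Bool → ι,
          ∏ t, centeredKernel p (ξ (w (t, false)) ω) (ξ (w (t, true)) ω) := fun ω => by
    rw [tsum_sq_empirical_sub_eq hp0 hp1, mul_pow, ← pow_mul]
    exact congrArg _ (sum_prod_pow_eq_sum_prod (fun a b => centeredKernel p (ξ a ω) (ξ b ω)) n)
  have hint := (integrable_finsetSum (univ : Finset (Fin n × Bool → ι)) fun w _ =>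
    integrable_prod_centeredKernel (P := P) hp0 hp1 hmeas w).const_mul ((1 / N) ^ (2 * n))
  rw [lintegral_congr fun ω => by rw [hexpand ω], ← ofReal_integral_eq_lintegral_ofReal hint
    (.of_forall fun ω => by
      dsimp only [Pi.zero_apply]
      rw [← hexpand ω]
      exact pow_nonneg (tsum_nonneg fun i => sq_nonneg _) n)]
  refine ENNReal.ofReal_le_ofReal ?_
  rw [integral_const_mul, integral_finsetSum _ fun w _ =>
    integrable_prod_centeredKernel hp0 hp1 hmeas w]
  calc _ ≤ (1 / N) ^ (2 * n) * ((n : ℝ) ^ (2 * n) * N ^ n * 2 ^ n) := by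
        gcongr
        exact sum_integral_prod_centeredKernel_le hp0 hp1 hmeas hindep hlaw n
    _ = (n : ℝ) ^ (2 * n) * 2 ^ n / N ^ n := by
        rw [one_div, inv_pow, show N ^ (2 * n) = N ^ n * N ^ n by ring]
        field_simp

end Moments

end EmpiricalFrequencies

open EmpiricalFrequencies

/-- For every `n ≥ 1` there is `γ̂_n ∈ (0,∞)`, depending only on `n`, such that for
every probability vector `p` on `ℕ`, every `m ≥ 1` and every i.i.d. family
`ξ_1, …, ξ_m` of `ℕ`-valued random variables with `P(ξ_j = i) = p_i`,
`E[(∑_i (μ_i^m − p_i)²)^n] ≤ γ̂_n / m^n`, where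
`μ_i^m = (1/m) ∑_j 1{ξ_j = i}` are the empirical frequencies. -/
theorem stmt16 :
    ∀ n : ℕ, 0 < n → ∃ γ : ℝ, 0 < γ ∧
      ∀ (Ω : Type*) (_ : MeasurableSpace Ω) (P : Measure Ω),
        IsProbabilityMeasure P →
        ∀ p : ℕ → ℝ, (∀ i, 0 ≤ p i) → HasSum p 1 →
        ∀ m : ℕ, 0 < m →
        ∀ ξ : Fin m → Ω → ℕ, (∀ j, Measurable (ξ j)) →
        iIndepFun ξ P →
        (∀ j i, P {ω | ξ j ω = i} = ENNReal.ofReal (p i)) →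
        ∫⁻ ω, ENNReal.ofReal
            ((∑' i, ((1 / (m : ℝ)) * ∑ j : Fin m,
                (if ξ j ω = i then (1 : ℝ) else 0) - p i) ^ 2) ^ n) ∂P
          ≤ ENNReal.ofReal (γ / (m : ℝ) ^ n) := by
  intro n _
  refine ⟨(n : ℝ) ^ (2 * n) * 2 ^ n, by positivity, ?_⟩
  intro Ω _ P _ p hp0 hp1 m hm ξ hmeas hindep hlaw
  have : Nonempty (Fin m) := ⟨⟨0, hm⟩⟩
  simpa using lintegral_pow_tsum_sq_empirical_sub_le hp0 hp1 hmeas hindep hlaw n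
end

section
/- Let p = (p_i)_{i∈ℕ} be a probability vector on ℕ and let (ξ_j)_{j∈ℕ} be an i.i.d. sequence of ℕ-valued random variables with P(ξ_j = i) = p_i. Let (a(m))_{m∈ℕ} be a sequence of positive reals such that ∑_{m=1}^∞ a(m)^{2n} < ∞ for some n ∈ ℕ. Then, almost surely, a(m)√m · (∑_{i=1}^∞ (μ_i^m − p_i)²)^{1/2} → 0 as m → ∞, where μ_i^m := (1/m) ∑_{j=1}^m 1{ξ_j = i}. -/
/-!
Write `V_m = ∑_{j,j' < m} K(ξ_j, ξ_j')` with `K(x, y) = ⟨δ_x - p, δ_y - p⟩_{ℓ²}`, so that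
`m² ‖μ^m - p‖² = V_m`. The kernel is bounded and degenerate: `E K(ξ_j, y) = 0` for every `y`.
Expanding `V_m^n` as a sum over `n`-tuples of index pairs, independence kills every term in which
some index occurs exactly once. The surviving tuples involve at most `n` distinct indices, so there
are at most `n^{2n} m^n` of them and `E V_m^n ≤ C m^n`. Hence `E (a(m)² m ‖μ^m - p‖²)^n ≤ C a(m)^{2n}`
is summable, and a series of nonnegative random variables with summable expectations converges
almost surely, so its terms tend to `0`.
-/

open MeasureTheory ProbabilityTheory Finset Filter Topology

theorem Finset.abs_prod_le_pow_card {ι : Type*} (s : Finset ι) {g : ι → ℝ} {B : ℝ}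
    (hg : ∀ k, |g k| ≤ B) : |∏ k ∈ s, g k| ≤ B ^ #s := by
  rw [abs_prod, ← prod_const]
  exact prod_le_prod (fun _ _ => abs_nonneg _) fun k _ => hg k

theorem Finset.exists_fin_image_eq {β : Type*} [DecidableEq β] {s : Finset β} {k : ℕ}
    (hs : s.Nonempty) (hk : #s ≤ k) : ∃ e : Fin k → β, univ.image e = s := by
  obtain ⟨x₀, hx₀⟩ := hs
  refine ⟨fun i => if h : (i : ℕ) < #s then s.equivFin.symm ⟨i, h⟩ else x₀, ?_⟩
  ext y
  simp only [mem_image, mem_univ, true_and]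
  constructor
  · rintro ⟨i, rfl⟩
    split_ifs <;> simp [hx₀]
  · intro hy
    exact ⟨Fin.castLE hk (s.equivFin ⟨y, hy⟩), by simp⟩

theorem two_mul_card_image_le_of_card_fiber_ne_one {κ β : Type*} [Fintype κ] [DecidableEq β]
    (h : κ → β) (hfib : ∀ s, #{s' | h s' = h s} ≠ 1) :
    2 * #(univ.image h) ≤ Fintype.card κ := by
  rw [← card_univ, card_eq_sum_card_image h univ, mul_comm, ← smul_eq_mul]
  refine card_nsmul_le_sum _ _ _ fun b hb => ?_
  obtain ⟨s, -, rfl⟩ := mem_image.1 hb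
  have hpos : 0 < #{s' | h s' = h s} := card_pos.2 ⟨s, by simp⟩
  have := hfib s
  omega

def slots {ι : Type*} (f : ι → ℕ × ℕ) : ι ⊕ ι → ℕ :=
  Sum.elim (fun k => (f k).1) (fun k => (f k).2)

/-- A family of `n` pairs in which no index occurs exactly once uses at most `n` distinct indices,
which an enumeration `e : Fin n → t` covers. -/
theorem card_filter_slots_fiber_ne_one_le {n : ℕ} (hn : 0 < n) (t : Finset ℕ) :
    #{f ∈ Fintype.piFinset (fun _ : Fin n => t ×ˢ t) | ∀ s, #{s' | slots f s' = slots f s} ≠ 1}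
      ≤ #t ^ n * n ^ (2 * n) := by
  have hcover :
      {f ∈ Fintype.piFinset (fun _ : Fin n => t ×ˢ t) | ∀ s, #{s' | slots f s' = slots f s} ≠ 1}
        ⊆ (Fintype.piFinset fun _ : Fin n => t).biUnion
          fun e => Fintype.piFinset fun _ : Fin n => univ.image e ×ˢ univ.image e := by
    have : Nonempty (Fin n) := ⟨⟨0, hn⟩⟩
    intro f hf
    obtain ⟨hft, hfib⟩ := mem_filter.1 hf
    have hcard : #(univ.image (slots f)) ≤ n := by
      have := two_mul_card_image_le_of_card_fiber_ne_one (slots f) hfib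
      simp only [Fintype.card_sum, Fintype.card_fin] at this
      omega
    obtain ⟨e, he⟩ := exists_fin_image_eq (univ_nonempty.image (slots f)) hcard
    have hslot : ∀ s, slots f s ∈ univ.image e := fun s => he ▸ mem_image_of_mem _ (mem_univ s)
    refine mem_biUnion.2 ⟨e, Fintype.mem_piFinset.2 fun i => ?_,
      Fintype.mem_piFinset.2 fun k => mem_product.2 ⟨hslot (.inl k), hslot (.inr k)⟩⟩
    obtain ⟨s, -, hs⟩ := mem_image.1 (he ▸ mem_image_of_mem e (mem_univ i))
    rw [← hs]
    rcases s with k | k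
    · exact (mem_product.1 (Fintype.mem_piFinset.1 hft k)).1
    · exact (mem_product.1 (Fintype.mem_piFinset.1 hft k)).2
  calc _ ≤ _ := card_le_card hcover
    _ ≤ ∑ e ∈ Fintype.piFinset (fun _ : Fin n => t),
          #(Fintype.piFinset fun _ : Fin n => univ.image e ×ˢ univ.image e) := card_biUnion_le
    _ ≤ ∑ e ∈ Fintype.piFinset (fun _ : Fin n => t), n ^ (2 * n) := by
        refine sum_le_sum fun e _ => ?_
        rw [Fintype.card_piFinset_const, card_product, ← sq, ← pow_mul, mul_comm 2 n]
        exact Nat.pow_le_pow_left (card_image_le.trans (by simp)) _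
    _ = #t ^ n * n ^ (2 * n) := by simp

def vStatistic {α : Type*} (K : α → α → ℝ) (v : ℕ → α) (m : ℕ) : ℝ :=
  ∑ q ∈ range m ×ˢ range m, K (v q.1) (v q.2)

theorem vStatistic_pow {α : Type*} (K : α → α → ℝ) (v : ℕ → α) (m n : ℕ) :
    vStatistic K v m ^ n = ∑ f ∈ Fintype.piFinset (fun _ : Fin n => range m ×ˢ range m),
      ∏ k, K (v (f k).1) (v (f k).2) := by
  rw [← prod_univ_sum (fun _ => range m ×ˢ range m) fun _ q => K (v q.1) (v q.2), prod_const,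
    card_univ, Fintype.card_fin, vStatistic]

section Independence

variable {Ω α β : Type*} {mΩ : MeasurableSpace Ω} {P : Measure Ω} [IsFiniteMeasure P]
  [mα : MeasurableSpace α] [MeasurableSpace β]

theorem ProbabilityTheory.IndepFun.integral_comp_eq_zero {X : Ω → α} {Y : Ω → β}
    (hXY : IndepFun X Y P) (hX : Measurable X) (hY : Measurable Y) {H : α → β → ℝ}
    (hH : Measurable (Function.uncurry H)) (hint : Integrable (fun ω => H (X ω) (Y ω)) P)
    (hzero : ∀ y, ∫ ω, H (X ω) y ∂P = 0) :
    ∫ ω, H (X ω) (Y ω) ∂P = 0 := by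
  have hmap : P.map (fun ω => (X ω, Y ω)) = (P.map X).prod (P.map Y) :=
    (indepFun_iff_map_prod_eq_prod_map_map hX.aemeasurable hY.aemeasurable).1 hXY
  have hint' : Integrable (Function.uncurry H) ((P.map X).prod (P.map Y)) := by
    rw [← hmap]
    exact (integrable_map_measure hH.aestronglyMeasurable (hX.prodMk hY).aemeasurable).2 hint
  calc ∫ ω, H (X ω) (Y ω) ∂P
      = ∫ z, Function.uncurry H z ∂((P.map X).prod (P.map Y)) := by
        rw [← hmap, integral_map (hX.prodMk hY).aemeasurable hH.aestronglyMeasurable]; rfl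
    _ = ∫ y, ∫ x, H x y ∂(P.map X) ∂(P.map Y) := integral_prod_symm _ hint'
    _ = 0 := by
        refine integral_eq_zero_of_ae (ae_of_all _ fun y => ?_)
        have hHy : Measurable fun x => H x y := hH.comp (measurable_id.prodMk measurable_const)
        simpa [integral_map hX.aemeasurable hHy.aestronglyMeasurable] using hzero y

variable {ξ : ℕ → Ω → α}

theorem measurable_iSup_comap {S : Set ℕ} {i : ℕ} (hi : i ∈ S) :
    Measurable[⨆ i ∈ S, mα.comap (ξ i)] (ξ i) :=
  (comap_measurable (ξ i)).mono (le_iSup₂ (f := fun i (_ : i ∈ S) => mα.comap (ξ i)) i hi) le_rfl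

theorem integral_mul_eq_zero_of_iIndepFun (hξ : ∀ j, Measurable (ξ j)) (hind : iIndepFun ξ P)
    {K : α → α → ℝ} (hK : Measurable (Function.uncurry K)) {j b : ℕ} (hb : b ≠ j)
    (hzero : ∀ y, ∫ ω, K (ξ j ω) y ∂P = 0) {W : Ω → ℝ}
    (hW : Measurable[⨆ i ∈ ({j}ᶜ : Set ℕ), mα.comap (ξ i)] W)
    (hint : Integrable (fun ω => K (ξ j ω) (ξ b ω) * W ω) P) :
    ∫ ω, K (ξ j ω) (ξ b ω) * W ω ∂P = 0 := by
  have hY : Measurable[⨆ i ∈ ({j}ᶜ : Set ℕ), mα.comap (ξ i)] fun ω => (ξ b ω, W ω) :=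
    (measurable_iSup_comap hb).prodMk hW
  have hindep : IndepFun (ξ j) (fun ω => (ξ b ω, W ω)) P := by
    rw [IndepFun_iff_Indep]
    refine indep_of_indep_of_le_right (indep_of_indep_of_le_left
      (indep_iSup_of_disjoint (fun i => (hξ i).comap_le) hind disjoint_compl_right)
      (measurable_iSup_comap (Set.mem_singleton j)).comap_le) hY.comap_le
  have hH : Measurable (Function.uncurry fun x (z : α × ℝ) => K x z.1 * z.2) :=
    (hK.comp (measurable_fst.prodMk (measurable_fst.comp measurable_snd))).mul
      (measurable_snd.comp measurable_snd)
  refine hindep.integral_comp_eq_zero (hξ j)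
    (hY.mono (iSup₂_le fun i _ => (hξ i).comap_le) le_rfl) hH hint fun z => ?_
  simp only [integral_mul_const, hzero, zero_mul]

end Independence

section Moment

variable {Ω α : Type*} {mΩ : MeasurableSpace Ω} {P : Measure Ω} [IsProbabilityMeasure P]
  [mα : MeasurableSpace α] {ξ : ℕ → Ω → α} {K : α → α → ℝ} {B : ℝ}
  (hξ : ∀ j, Measurable (ξ j)) (hK : Measurable (Function.uncurry K))
  (hKB : ∀ x y, |K x y| ≤ B)
include hξ hK hKB

theorem integrable_prod_kernel {ι : Type*} (s : Finset ι) (f : ι → ℕ × ℕ) :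
    Integrable (fun ω => ∏ k ∈ s, K (ξ (f k).1 ω) (ξ (f k).2 ω)) P :=
  .of_bound (Finset.measurable_prod _ fun _ _ =>
    hK.comp ((hξ _).prodMk (hξ _))).aestronglyMeasurable (B ^ #s)
    (ae_of_all _ fun _ => s.abs_prod_le_pow_card fun _ => hKB _ _)

theorem integrable_vStatistic_pow (m n : ℕ) :
    Integrable (fun ω => vStatistic K (fun j => ξ j ω) m ^ n) P := by
  simp_rw [vStatistic_pow]
  exact integrable_finsetSum _ fun f _ => integrable_prod_kernel hξ hK hKB univ f

variable (hind : iIndepFun ξ P) (hKsymm : ∀ x y, K x y = K y x)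
  (hzero : ∀ j y, ∫ ω, K (ξ j ω) y ∂P = 0)
include hind hKsymm hzero

/-- The index in slot `s₀` occurs in no other factor, so by independence the factor containing it
integrates to zero. -/
theorem integral_prod_kernel_eq_zero {ι : Type*} [Fintype ι] [DecidableEq ι]
    (f : ι → ℕ × ℕ) {s₀ : ι ⊕ ι} (hs₀ : #{s | slots f s = slots f s₀} = 1) :
    ∫ ω, ∏ k, K (ξ (f k).1 ω) (ξ (f k).2 ω) ∂P = 0 := by
  set j := slots f s₀
  have hlone : ∀ s, slots f s = j → s = s₀ := by
    obtain ⟨a, ha⟩ := card_eq_one.1 hs₀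
    have h₀ : s₀ = a := mem_singleton.1 (ha ▸ mem_filter.2 ⟨mem_univ _, rfl⟩)
    exact fun s hs => h₀ ▸ mem_singleton.1 (ha ▸ mem_filter.2 ⟨mem_univ _, hs⟩)
  obtain ⟨k₀, b, hb, hother, hpair⟩ : ∃ k₀ b, b ≠ j ∧
      (∀ k ≠ k₀, (f k).1 ≠ j ∧ (f k).2 ≠ j) ∧
      ∀ ω, K (ξ (f k₀).1 ω) (ξ (f k₀).2 ω) = K (ξ j ω) (ξ b ω) := by
    have hother : ∀ k, Sum.inl k ≠ s₀ → Sum.inr k ≠ s₀ → (f k).1 ≠ j ∧ (f k).2 ≠ j :=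
      fun k h₁ h₂ => ⟨fun h => h₁ (hlone _ h), fun h => h₂ (hlone _ h)⟩
    rcases s₀ with k₀ | k₀
    · exact ⟨k₀, (f k₀).2, fun h => Sum.inr_ne_inl (hlone (.inr k₀) h),
        fun k hk => hother k (by simpa using hk) (by simp), fun _ => rfl⟩
    · exact ⟨k₀, (f k₀).1, fun h => Sum.inl_ne_inr (hlone (.inl k₀) h),
        fun k hk => hother k (by simp) (by simpa using hk), fun ω => hKsymm _ _⟩
  have hsplit : ∀ ω, ∏ k, K (ξ (f k).1 ω) (ξ (f k).2 ω) =
      K (ξ j ω) (ξ b ω) * ∏ k ∈ univ.erase k₀, K (ξ (f k).1 ω) (ξ (f k).2 ω) := fun ω => by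
    rw [← mul_prod_erase univ _ (mem_univ k₀), hpair]
  have hrest : Measurable[⨆ i ∈ ({j}ᶜ : Set ℕ), mα.comap (ξ i)]
      fun ω => ∏ k ∈ univ.erase k₀, K (ξ (f k).1 ω) (ξ (f k).2 ω) :=
    Finset.measurable_prod _ fun k hk =>
      have h := hother k (ne_of_mem_erase hk)
      hK.comp ((measurable_iSup_comap h.1).prodMk (measurable_iSup_comap h.2))
  rw [integral_congr_ae (ae_of_all _ hsplit)]
  exact integral_mul_eq_zero_of_iIndepFun hξ hind hK hb (hzero j) hrest
    ((integrable_prod_kernel hξ hK hKB univ f).congr (ae_of_all _ hsplit))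

theorem integral_vStatistic_pow_le {n : ℕ} (hn : 0 < n) (m : ℕ) :
    ∫ ω, vStatistic K (fun j => ξ j ω) m ^ n ∂P ≤ n ^ (2 * n) * B ^ n * m ^ n := by
  have hB : 0 ≤ B := by
    obtain ⟨ω⟩ := nonempty_of_isProbabilityMeasure P
    exact (abs_nonneg _).trans (hKB (ξ 0 ω) (ξ 0 ω))
  set E := Fintype.piFinset fun _ : Fin n => range m ×ˢ range m
  set I := fun f : Fin n → ℕ × ℕ => ∫ ω, ∏ k, K (ξ (f k).1 ω) (ξ (f k).2 ω) ∂P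
  have hI : ∀ f, I f ≤ B ^ n := fun f => (le_abs_self _).trans <| by
    simpa using norm_integral_le_of_norm_le_const (μ := P)
      (f := fun ω => ∏ k, K (ξ (f k).1 ω) (ξ (f k).2 ω))
      (ae_of_all _ fun ω => univ.abs_prod_le_pow_card fun k => hKB _ _)
  calc ∫ ω, vStatistic K (fun j => ξ j ω) m ^ n ∂P = ∑ f ∈ E, I f := by
        simp_rw [vStatistic_pow]
        exact integral_finsetSum _ fun f _ => integrable_prod_kernel hξ hK hKB univ f
    _ = ∑ f ∈ E with ∀ s, #{s' | slots f s' = slots f s} ≠ 1, I f :=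
        (sum_filter_of_ne fun f _ hf s hs =>
          hf (integral_prod_kernel_eq_zero hξ hK hKB hind hKsymm hzero f hs)).symm
    _ ≤ #{f ∈ E | ∀ s, #{s' | slots f s' = slots f s} ≠ 1} • B ^ n :=
        sum_le_card_nsmul _ _ _ fun f _ => hI f
    _ ≤ n ^ (2 * n) * B ^ n * m ^ n := by
        have hcount := card_filter_slots_fiber_ne_one_le hn (range m)
        rw [card_range] at hcount
        rw [nsmul_eq_mul, mul_right_comm]
        gcongr
        exact_mod_cast hcount.trans_eq (mul_comm _ _)

end Moment

theorem integral_comp_eq_tsum {Ω : Type*} {mΩ : MeasurableSpace Ω} {P : Measure Ω} {p : ℕ → ℝ}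
    (hp0 : ∀ i, 0 ≤ p i) {X : Ω → ℕ} (hX : Measurable X)
    (hlaw : ∀ i, P {ω | X ω = i} = ENNReal.ofReal (p i)) {g : ℕ → ℝ}
    (hg : Integrable (fun ω => g (X ω)) P) :
    ∫ ω, g (X ω) ∂P = ∑' i, p i * g i := by
  have hgm := (measurable_of_countable g).aestronglyMeasurable (μ := P.map X)
  rw [← integral_map hX.aemeasurable hgm,
    integral_countable ((integrable_map_measure hgm hX.aemeasurable).2 hg)]
  refine tsum_congr fun i => ?_
  rw [smul_eq_mul, measureReal_def, Measure.map_apply hX (measurableSet_singleton i)]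
  simp [Set.preimage, hlaw, hp0 i]

/-- `⟨δ_x - p, δ_y - p⟩` in `ℓ²(ℕ)`, see `hasSum_centeredKernel`. -/
noncomputable def centeredKernel (p : ℕ → ℝ) (x y : ℕ) : ℝ :=
  (if x = y then 1 else 0) - p x - p y + ∑' i, p i ^ 2

noncomputable def empiricalSqDist (p : ℕ → ℝ) (v : ℕ → ℕ) (m : ℕ) : ℝ :=
  ∑' i, ((1 / (m : ℝ)) * ∑ j ∈ range m, (if v j = i then (1 : ℝ) else 0) - p i) ^ 2

section CenteredKernel

variable {p : ℕ → ℝ}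

theorem hasSum_centeredKernel (hp : Summable fun i => p i ^ 2) (x y : ℕ) :
    HasSum (fun i => ((if x = i then 1 else 0) - p i) * ((if y = i then 1 else 0) - p i))
      (centeredKernel p x y) := by
  have h := (((hasSum_ite_eq x (if x = y then (1 : ℝ) else 0)).sub (hasSum_ite_eq x (p x))).sub
    (hasSum_ite_eq y (p y))).add hp.hasSum
  rw [centeredKernel]
  refine h.congr_fun fun i => ?_
  rcases eq_or_ne i x with rfl | hx <;> rcases eq_or_ne i y with rfl | hy <;>
    simp [*, Ne.symm] <;> ring

theorem centeredKernel_comm (x y : ℕ) : centeredKernel p x y = centeredKernel p y x := by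
  simp only [centeredKernel, eq_comm (a := x)]
  ring

theorem sq_mul_empiricalSqDist (hp : Summable fun i => p i ^ 2) (v : ℕ → ℕ) (m : ℕ) :
    (m : ℝ) ^ 2 * empiricalSqDist p v m = vStatistic (centeredKernel p) v m := by
  have hscale : ∀ i, (m : ℝ) * ((1 / (m : ℝ)) * ∑ j ∈ range m,
      (if v j = i then (1 : ℝ) else 0) - p i) =
        ∑ j ∈ range m, ((if v j = i then 1 else 0) - p i) := by
    intro i
    rcases eq_or_ne m 0 with rfl | hm
    · simp
    · rw [sum_sub_distrib, sum_const, card_range, nsmul_eq_mul]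
      field_simp
  have hsum := hasSum_sum (s := range m ×ˢ range m) fun q _ =>
    hasSum_centeredKernel hp (v q.1) (v q.2)
  rw [empiricalSqDist, vStatistic, ← tsum_mul_left, ← hsum.tsum_eq]
  refine tsum_congr fun i => ?_
  rw [← mul_pow, hscale, sq, sum_mul_sum, sum_product]

theorem mul_empiricalSqDist_eq (hp : Summable fun i => p i ^ 2) (v : ℕ → ℕ) (m : ℕ) :
    m * empiricalSqDist p v m = vStatistic (centeredKernel p) v m / m := by
  rcases eq_or_ne (m : ℝ) 0 with hm | hm
  · simp [hm]
  · rw [← sq_mul_empiricalSqDist hp, sq, mul_assoc, mul_div_cancel_left₀ _ hm]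

variable (hp0 : ∀ i, 0 ≤ p i) (hp1 : HasSum p 1)
include hp0 hp1

theorem summable_sq_of_hasSum_one : Summable fun i => p i ^ 2 :=
  hp1.summable.of_nonneg_of_le (fun i => sq_nonneg _) fun i => by
    nlinarith [hp0 i, le_hasSum hp1 i fun j _ => hp0 j]

theorem abs_centeredKernel_le (x y : ℕ) : |centeredKernel p x y| ≤ 2 := by
  have hle : ∀ i, p i ≤ 1 := fun i => le_hasSum hp1 i fun j _ => hp0 j
  have hs : ∑' i, p i ^ 2 ≤ 1 := hp1.tsum_eq ▸ (summable_sq_of_hasSum_one hp0 hp1).tsum_le_tsum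
    (fun i => by nlinarith [hp0 i, hle i]) hp1.summable
  have hs0 : 0 ≤ ∑' i, p i ^ 2 := tsum_nonneg fun i => sq_nonneg _
  have hxy : (0 : ℝ) ≤ (if x = y then 1 else 0) ∧ (if x = y then (1 : ℝ) else 0) ≤ 1 := by
    split_ifs <;> norm_num
  rw [centeredKernel, abs_le]
  constructor <;> linarith [hp0 x, hp0 y, hle x, hle y]

theorem hasSum_mul_centeredKernel (y : ℕ) : HasSum (fun x => p x * centeredKernel p x y) 0 := by
  have h := ((((hasSum_ite_eq y (p y)).sub (summable_sq_of_hasSum_one hp0 hp1).hasSum).sub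
    (hp1.mul_right (p y))).add (hp1.mul_right (∑' i, p i ^ 2)))
  rw [show (0 : ℝ) = p y - ∑' i, p i ^ 2 - 1 * p y + 1 * ∑' i, p i ^ 2 by ring]
  refine h.congr_fun fun x => ?_
  by_cases hx : x = y <;> simp [centeredKernel, hx] <;> ring

variable {Ω : Type*} {mΩ : MeasurableSpace Ω} {P : Measure Ω} [IsFiniteMeasure P] {X : Ω → ℕ}
  (hX : Measurable X) (hlaw : ∀ i, P {ω | X ω = i} = ENNReal.ofReal (p i))
include hX hlaw

theorem integral_centeredKernel_eq_zero (y : ℕ) : ∫ ω, centeredKernel p (X ω) y ∂P = 0 := by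
  have hint : Integrable (fun ω => centeredKernel p (X ω) y) P :=
    .of_bound ((measurable_of_countable (centeredKernel p · y)).comp hX).aestronglyMeasurable 2
      (ae_of_all _ fun ω => abs_centeredKernel_le hp0 hp1 _ _)
  rw [integral_comp_eq_tsum (g := (centeredKernel p · y)) hp0 hX hlaw hint]
  exact (hasSum_mul_centeredKernel hp0 hp1 y).tsum_eq

end CenteredKernel

section EmpiricalMoment

variable {Ω : Type*} [MeasurableSpace Ω] {P : Measure Ω} [IsProbabilityMeasure P]
  {p : ℕ → ℝ} (hp0 : ∀ i, 0 ≤ p i) (hp1 : HasSum p 1)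
  {ξ : ℕ → Ω → ℕ} (hmeas : ∀ j, Measurable (ξ j)) (hindep : iIndepFun ξ P)
  (hlaw : ∀ j i, P {ω | ξ j ω = i} = ENNReal.ofReal (p i))
include hp0 hp1 hmeas

theorem integrable_mul_empiricalSqDist_pow (m n : ℕ) :
    Integrable (fun ω => ((m : ℝ) * empiricalSqDist p (fun j => ξ j ω) m) ^ n) P := by
  simp_rw [mul_empiricalSqDist_eq (summable_sq_of_hasSum_one hp0 hp1), div_pow]
  exact (integrable_vStatistic_pow hmeas (measurable_of_countable _)
    (abs_centeredKernel_le hp0 hp1) m n).div_const _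

include hindep hlaw

theorem integral_mul_empiricalSqDist_pow_le {n : ℕ} (hn : 0 < n) (m : ℕ) :
    ∫ ω, ((m : ℝ) * empiricalSqDist p (fun j => ξ j ω) m) ^ n ∂P ≤ n ^ (2 * n) * 2 ^ n := by
  simp_rw [mul_empiricalSqDist_eq (summable_sq_of_hasSum_one hp0 hp1), div_pow]
  rw [integral_div]
  exact div_le_of_le_mul₀ (by positivity) (by positivity)
    (integral_vStatistic_pow_le hmeas (measurable_of_countable _) (abs_centeredKernel_le hp0 hp1)
      hindep centeredKernel_comm
      (fun j => integral_centeredKernel_eq_zero hp0 hp1 (hmeas j) (hlaw j)) hn m)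

end EmpiricalMoment

theorem ae_tendsto_zero_of_summable_integral {Ω : Type*} {mΩ : MeasurableSpace Ω}
    {P : Measure Ω} {Y : ℕ → Ω → ℝ} (hY0 : ∀ m, 0 ≤ᵐ[P] Y m)
    (hint : ∀ m, Integrable (Y m) P) (hsum : Summable fun m => ∫ ω, Y m ω ∂P) :
    ∀ᵐ ω ∂P, Tendsto (fun m => Y m ω) atTop (𝓝 0) := by
  have hmeas : ∀ m, AEMeasurable (fun ω => ENNReal.ofReal (Y m ω)) P :=
    fun m => (hint m).aemeasurable.ennreal_ofReal
  have hfin : ∫⁻ ω, ∑' m, ENNReal.ofReal (Y m ω) ∂P ≠ ⊤ := by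
    rw [lintegral_tsum hmeas, tsum_congr fun m =>
      (ofReal_integral_eq_lintegral_ofReal (hint m) (hY0 m)).symm,
      ← ENNReal.ofReal_tsum_of_nonneg (fun m => integral_nonneg_of_ae (hY0 m)) hsum]
    exact ENNReal.ofReal_ne_top
  filter_upwards [ae_lt_top' (AEMeasurable.tsum hmeas) hfin, ae_all_iff.2 hY0] with ω hω hω0
  refine Summable.tendsto_atTop_zero ((ENNReal.summable_toReal hω.ne).congr fun m => ?_)
  exact ENNReal.toReal_ofReal (hω0 m)

theorem tendsto_zero_of_tendsto_pow_zero {x : ℕ → ℝ} (hx : ∀ m, 0 ≤ x m) {n : ℕ} (hn : n ≠ 0)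
    (h : Tendsto (fun m => x m ^ n) atTop (𝓝 0)) : Tendsto x atTop (𝓝 0) := by
  have h' := h.rpow_const (p := (n : ℝ)⁻¹) (Or.inr (by positivity))
  rw [Real.zero_rpow (by positivity)] at h'
  exact h'.congr fun m => Real.pow_rpow_inv_natCast (hx m) hn

/-- Let `p` be a probability vector on `ℕ`, `(ξ_j)` i.i.d. `ℕ`-valued random
variables with `P(ξ_j = i) = p_i`, and `(a(m))` positive reals with
`∑_m a(m)^{2n} < ∞` for some `n ≥ 1`. Then, almost surely,
`a(m)√m · (∑_i (μ_i^m − p_i)²)^{1/2} → 0`, where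
`μ_i^m = (1/m) ∑_{j<m} 1{ξ_j = i}`. -/
theorem stmt17 (Ω : Type*) [MeasurableSpace Ω] (P : Measure Ω)
    [IsProbabilityMeasure P]
    (p : ℕ → ℝ) (hp0 : ∀ i, 0 ≤ p i) (hp1 : HasSum p 1)
    (ξ : ℕ → Ω → ℕ) (hmeas : ∀ j, Measurable (ξ j))
    (hindep : iIndepFun ξ P)
    (hlaw : ∀ j i, P {ω | ξ j ω = i} = ENNReal.ofReal (p i))
    (a : ℕ → ℝ) (ha : ∀ m, 0 < a m)
    (n : ℕ) (hn : 0 < n) (hsum : Summable fun m => a m ^ (2 * n)) :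
    ∀ᵐ ω ∂P, Filter.Tendsto
      (fun m : ℕ => a m * Real.sqrt m *
        Real.sqrt (∑' i, ((1 / (m : ℝ)) * ∑ j ∈ Finset.range m,
          (if ξ j ω = i then (1 : ℝ) else 0) - p i) ^ 2))
      Filter.atTop (nhds 0) := by
  set D : ℕ → Ω → ℝ := fun m ω => empiricalSqDist p (fun j => ξ j ω) m
  have hD0 : ∀ m ω, 0 ≤ D m ω := fun m ω => tsum_nonneg fun i => sq_nonneg _
  set Y : ℕ → Ω → ℝ := fun m ω => a m ^ (2 * n) * (m * D m ω) ^ n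
  have hY0 : ∀ m ω, 0 ≤ Y m ω := fun m ω =>
    mul_nonneg (pow_nonneg (ha m).le _) (pow_nonneg (mul_nonneg m.cast_nonneg (hD0 m ω)) _)
  have hYle : ∀ m, ∫ ω, Y m ω ∂P ≤ n ^ (2 * n) * 2 ^ n * a m ^ (2 * n) := fun m => by
    rw [integral_const_mul, mul_comm]
    exact mul_le_mul_of_nonneg_right
      (integral_mul_empiricalSqDist_pow_le hp0 hp1 hmeas hindep hlaw hn m)
      (pow_nonneg (ha m).le _)
  have hY : ∀ᵐ ω ∂P, Tendsto (fun m => Y m ω) atTop (𝓝 0) :=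
    ae_tendsto_zero_of_summable_integral (fun m => ae_of_all _ (hY0 m))
      (fun m => (integrable_mul_empiricalSqDist_pow hp0 hp1 hmeas m n).const_mul _)
      ((hsum.mul_left _).of_nonneg_of_le (fun m => integral_nonneg (hY0 m)) hYle)
  filter_upwards [hY] with ω hω
  have hsqrt := (Real.continuous_sqrt.tendsto 0).comp <|
    tendsto_zero_of_tendsto_pow_zero (x := fun m => a m ^ 2 * (m * D m ω))
      (fun m => by have := hD0 m ω; positivity) hn.ne'
      (hω.congr fun m => by rw [mul_pow, ← pow_mul])
  rw [Real.sqrt_zero] at hsqrt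
  refine hsqrt.congr fun m => ?_
  rw [Function.comp_apply, Real.sqrt_mul (sq_nonneg _), Real.sqrt_mul (Nat.cast_nonneg _),
    Real.sqrt_sq (ha m).le, mul_assoc]
  rfl
end
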